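/- arXiv:math/0507310 — 6 statements merged into one kernel-verified Lean document; each statement's English description precedes it below -/
import Mathlib

section
/- The function W_0 : M^{3×2} → [0,+∞] defined by W_0(ξ) := inf_{ζ∈ℝ³} W(ξ|ζ) is continuous (as a map into the extended nonnegative reals). -/
/-!
As an infimum of the continuous maps `ξ ↦ W (ξ|ζ)`, `W₀` is upper semicontinuous. Coercivity
gives `W (ξ|ζ) ≥ C |ζ|^p`, so below any finite level only the `ζ` in a fixed ball matter,
uniformly in `ξ`; on that compact ball the tube lemma turns continuity of
`(ξ, ζ) ↦ W (ξ|ζ)` into lower semicontinuity of the infimum.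
-/

open scoped ENNReal
open MeasureTheory Filter

noncomputable section

attribute [local instance] Matrix.normedAddCommGroup

/-- `juxt ξ ζ` is the 3×3 matrix whose first two columns are the columns of the 3×2 matrix `ξ`
and whose third column is `ζ`, i.e. the matrix denoted `(ξ|ζ)` in the paper. -/
def juxt (ξ : Matrix (Fin 3) (Fin 2) ℝ) (ζ : Fin 3 → ℝ) : Matrix (Fin 3) (Fin 3) ℝ :=
  Matrix.of fun i k => Fin.lastCases (ζ i) (fun j => ξ i j) k

/-- `W0 W ξ = inf_{ζ ∈ ℝ³} W (ξ|ζ)`. -/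
def W0 (W : Matrix (Fin 3) (Fin 3) ℝ → ℝ≥0∞) (ξ : Matrix (Fin 3) (Fin 2) ℝ) : ℝ≥0∞ :=
  ⨅ ζ : Fin 3 → ℝ, W (juxt ξ ζ)

open Topology

theorem lowerSemicontinuous_iInf_of_forall_le_off_compact {X Y β : Type*} [TopologicalSpace X]
    [TopologicalSpace Y] [CompleteLinearOrder β] [DenselyOrdered β] {f : X × Y → β}
    (hf : LowerSemicontinuous f)
    (hcoer : ∀ b < ⊤, ∃ K : Set Y, IsCompact K ∧ ∀ x, ∀ y ∉ K, b ≤ f (x, y)) :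
    LowerSemicontinuous fun x => ⨅ y, f (x, y) := by
  intro x₀ a ha
  obtain ⟨b, hab, hb⟩ := exists_between ha
  obtain ⟨K, hK, hfK⟩ := hcoer b (hb.trans_le le_top)
  have hsub : {x₀} ×ˢ K ⊆ f ⁻¹' Set.Ioi b := by
    rintro ⟨x, y⟩ ⟨rfl, -⟩
    exact hb.trans_le (iInf_le _ y)
  obtain ⟨u, v, hu, -, hx₀u, hKv, huv⟩ :=
    generalized_tube_lemma isCompact_singleton hK (hf.isOpen_preimage b) hsub
  filter_upwards [hu.mem_nhds (hx₀u rfl)] with x hx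
  refine hab.trans_le (le_iInf fun y => ?_)
  by_cases hy : y ∈ K
  · exact (huv ⟨hx, hKv hy⟩).le
  · exact hfK x y hy

theorem exists_forall_le_of_coercive {E : Type*} [SeminormedAddCommGroup E] {p C : ℝ}
    (hp : 0 < p) (hC : 0 < C) {W : E → ℝ≥0∞}
    (hW : ∀ F, ENNReal.ofReal (C * ‖F‖ ^ p) ≤ W F) {b : ℝ≥0∞} (hb : b < ⊤) :
    ∃ R, ∀ F, R ≤ ‖F‖ → b ≤ W F := by
  have hlim : Tendsto (fun t : ℝ => ENNReal.ofReal (C * t ^ p)) atTop (𝓝 ⊤) :=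
    ENNReal.tendsto_ofReal_atTop.comp ((tendsto_rpow_atTop hp).const_mul_atTop hC)
  obtain ⟨R, hR⟩ := eventually_atTop.1 (hlim.eventually_const_le hb)
  exact ⟨R, fun F hF => (hR _ hF).trans (hW F)⟩

theorem continuous_juxt :
    Continuous fun q : Matrix (Fin 3) (Fin 2) ℝ × (Fin 3 → ℝ) => juxt q.1 q.2 := by
  refine continuous_pi fun i => continuous_pi fun k => ?_
  induction k using Fin.lastCases with
  | last =>
    simp only [juxt, Matrix.of_apply, Fin.lastCases_last]
    fun_prop
  | cast j =>
    simp only [juxt, Matrix.of_apply, Fin.lastCases_castSucc]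
    fun_prop

theorem norm_le_norm_juxt (ξ : Matrix (Fin 3) (Fin 2) ℝ) (ζ : Fin 3 → ℝ) :
    ‖ζ‖ ≤ ‖juxt ξ ζ‖ :=
  (pi_norm_le_iff_of_nonneg (norm_nonneg _)).2 fun i => by
    simpa only [juxt, Matrix.of_apply, Fin.lastCases_last] using
      Matrix.norm_entry_le_entrywise_sup_norm (juxt ξ ζ) (i := i) (j := Fin.last 2)

/-- Lemma 2.2(i): `W₀` is continuous as a map into `[0,+∞]`. -/
theorem W0_continuous (p C : ℝ) (hp : 1 < p) (hC : 0 < C)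
    (W : Matrix (Fin 3) (Fin 3) ℝ → ℝ≥0∞)
    (hWcont : Continuous W)
    (hWcoer : ∀ F : Matrix (Fin 3) (Fin 3) ℝ, ENNReal.ofReal (C * ‖F‖ ^ p) ≤ W F) :
    Continuous (W0 W) := by
  have hWjuxt : Continuous fun q : Matrix (Fin 3) (Fin 2) ℝ × (Fin 3 → ℝ) => W (juxt q.1 q.2) :=
    hWcont.comp continuous_juxt
  refine continuous_iff_lower_upperSemicontinuous.2 ⟨?_, ?_⟩
  · refine lowerSemicontinuous_iInf_of_forall_le_off_compact hWjuxt.lowerSemicontinuous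
      fun b hb => ?_
    obtain ⟨R, hR⟩ := exists_forall_le_of_coercive (by linarith) hC hWcoer hb
    refine ⟨Metric.closedBall 0 R, isCompact_closedBall 0 R, fun ξ ζ hζ => hR _ ?_⟩
    rw [Metric.mem_closedBall, dist_zero_right, not_le] at hζ
    exact hζ.le.trans (norm_le_norm_juxt ξ ζ)
  · exact upperSemicontinuous_iInf fun ζ =>
      (hWjuxt.comp (continuous_id.prodMk continuous_const)).upperSemicontinuous
end
end

section
/- Assume W satisfies (Nim): W(F) = +∞ if and only if det F ≤ 0. Then for all ξ₁, ξ₂ ∈ ℝ³, W_0(ξ₁|ξ₂) = +∞ if and only if ξ₁ ∧ ξ₂ = 0, where ξ₁ ∧ ξ₂ denotes the cross product of ξ₁ and ξ₂ and (ξ₁|ξ₂) denotes the 3×2 matrix with columns ξ₁, ξ₂. -/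
/- Under (Nim) every `W (ξ₁|ξ₂|ζ)` is infinite exactly when `det (ξ₁|ξ₂|ζ) = (ξ₁ ∧ ξ₂) ⬝ ζ ≤ 0`.
This holds for all `ζ` iff `ξ₁ ∧ ξ₂ = 0`, as one sees by testing `ζ = ξ₁ ∧ ξ₂`. -/

open scoped ENNReal
open MeasureTheory Filter

noncomputable section

attribute [local instance] Matrix.normedAddCommGroup

/-- `cols2 ξ₁ ξ₂` is the 3×2 matrix with columns `ξ₁` and `ξ₂`. -/
def cols2 (ξ₁ ξ₂ : Fin 3 → ℝ) : Matrix (Fin 3) (Fin 2) ℝ :=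
  Matrix.of fun i j => ![ξ₁ i, ξ₂ i] j

lemma juxt_cols2 (ξ₁ ξ₂ ζ : Fin 3 → ℝ) :
    juxt (cols2 ξ₁ ξ₂) ζ = (Matrix.of ![ξ₁, ξ₂, ζ]).transpose := by
  ext i k
  fin_cases k <;> rfl

lemma det_juxt_cols2 (ξ₁ ξ₂ ζ : Fin 3 → ℝ) :
    (juxt (cols2 ξ₁ ξ₂) ζ).det = crossProduct ξ₁ ξ₂ ⬝ᵥ ζ := by
  calc (juxt (cols2 ξ₁ ξ₂) ζ).det = Matrix.det ![ξ₁, ξ₂, ζ] := by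
        rw [juxt_cols2, Matrix.det_transpose]; rfl
    _ = ξ₁ ⬝ᵥ crossProduct ξ₂ ζ := (triple_product_eq_det ξ₁ ξ₂ ζ).symm
    _ = crossProduct ξ₁ ξ₂ ⬝ᵥ ζ := by
        rw [triple_product_permutation, triple_product_permutation, dotProduct_comm]

lemma forall_dotProduct_nonpos_iff {n R : Type*} [Fintype n] [Ring R] [LinearOrder R]
    [IsStrictOrderedRing R] {v : n → R} : (∀ w, v ⬝ᵥ w ≤ 0) ↔ v = 0 := by
  refine ⟨fun h => ?_, fun hv w => by simp [hv]⟩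
  have hvv : 0 ≤ v ⬝ᵥ v := Fintype.sum_nonneg fun i => mul_self_nonneg (v i)
  exact dotProduct_self_eq_zero.mp (le_antisymm (h v) hvv)

theorem W0_eq_top_iff_cross_eq_zero_general
    (W : Matrix (Fin 3) (Fin 3) ℝ → ℝ≥0∞)
    (hNim : ∀ F : Matrix (Fin 3) (Fin 3) ℝ, W F = ⊤ ↔ F.det ≤ 0) :
    ∀ ξ₁ ξ₂ : Fin 3 → ℝ, W0 W (cols2 ξ₁ ξ₂) = ⊤ ↔ crossProduct ξ₁ ξ₂ = 0 := by
  intro ξ₁ ξ₂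
  simp only [W0, iInf_eq_top, hNim, det_juxt_cols2]
  exact forall_dotProduct_nonpos_iff

/-- Lemma 2.2(ii): under (Nim), `W₀(ξ₁|ξ₂) = +∞` if and only if `ξ₁ ∧ ξ₂ = 0`. -/
theorem W0_eq_top_iff_cross_eq_zero (p C : ℝ) (hp : 1 < p) (hC : 0 < C)
    (W : Matrix (Fin 3) (Fin 3) ℝ → ℝ≥0∞)
    (hWcont : Continuous W)
    (hWcoer : ∀ F : Matrix (Fin 3) (Fin 3) ℝ, ENNReal.ofReal (C * ‖F‖ ^ p) ≤ W F)
    (hNim : ∀ F : Matrix (Fin 3) (Fin 3) ℝ, W F = ⊤ ↔ F.det ≤ 0) :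
    ∀ ξ₁ ξ₂ : Fin 3 → ℝ, W0 W (cols2 ξ₁ ξ₂) = ⊤ ↔ crossProduct ξ₁ ξ₂ = 0 :=
  W0_eq_top_iff_cross_eq_zero_general W hNim
end
end

section
/- Assume W satisfies (Icv): for every δ > 0 there exists c_δ > 0 such that for all F ∈ M^{3×3}, if det F ≥ δ then W(F) ≤ c_δ(1+|F|^p). Then W_0 satisfies (Icvbis): for every δ > 0 there exists c_δ > 0 such that for all ξ = (ξ₁|ξ₂) ∈ M^{3×2}, if |ξ₁ ∧ ξ₂| ≥ δ then W_0(ξ) ≤ c_δ(1+|ξ|^p), where ξ₁ ∧ ξ₂ is the cross product of the two columns of ξ. -/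
open scoped ENNReal
open MeasureTheory Filter

noncomputable section

attribute [local instance] Matrix.normedAddCommGroup

section Juxt

variable (ξ : Matrix (Fin 3) (Fin 2) ℝ) (ζ : Fin 3 → ℝ)

@[simp]
lemma juxt_castSucc (i : Fin 3) (j : Fin 2) : juxt ξ ζ i j.castSucc = ξ i j :=
  (Matrix.of_apply _ _ _).trans (Fin.lastCases_castSucc j)

@[simp]
lemma juxt_two (i : Fin 3) : juxt ξ ζ i 2 = ζ i :=
  (Matrix.of_apply _ _ _).trans Fin.lastCases_last

lemma det_juxt :
    (juxt ξ ζ).det = crossProduct (fun i => ξ i 0) (fun i => ξ i 1) ⬝ᵥ ζ := by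
  have h0 : ∀ i, juxt ξ ζ i 0 = ξ i 0 := fun i => juxt_castSucc ξ ζ i 0
  have h1 : ∀ i, juxt ξ ζ i 1 = ξ i 1 := fun i => juxt_castSucc ξ ζ i 1
  have h2 : ∀ i, juxt ξ ζ i 2 = ζ i := juxt_two ξ ζ
  simp only [Matrix.det_fin_three, h0, h1, h2, cross_apply, dotProduct, Fin.sum_univ_three,
    Matrix.cons_val_zero, Matrix.cons_val_one, Matrix.cons_val_two, Matrix.head_cons,
    Matrix.tail_cons]
  ring

lemma norm_juxt : ‖juxt ξ ζ‖ = max ‖ξ‖ ‖ζ‖ := by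
  refine le_antisymm ?_ (max_le ?_ ?_)
  · refine (Matrix.norm_le_iff (le_max_of_le_right (norm_nonneg ζ))).2 fun i k => ?_
    induction k using Fin.lastCases with
    | last => simpa using (norm_le_pi_norm ζ i).trans (le_max_right _ _)
    | cast j => simpa using (Matrix.norm_entry_le_entrywise_sup_norm ξ).trans (le_max_left _ _)
  · refine (Matrix.norm_le_iff (norm_nonneg _)).2 fun i j => ?_
    simpa using Matrix.norm_entry_le_entrywise_sup_norm (juxt ξ ζ) (i := i) (j := j.castSucc)
  · refine (pi_norm_le_iff_of_nonneg (norm_nonneg _)).2 fun i => ?_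
    simpa using Matrix.norm_entry_le_entrywise_sup_norm (juxt ξ ζ) (i := i) (j := 2)

end Juxt

lemma sq_norm_le_dotProduct_self {ι : Type*} [Fintype ι] (v : ι → ℝ) : ‖v‖ ^ 2 ≤ v ⬝ᵥ v := by
  have hcoord : ∀ i, v i ^ 2 ≤ v ⬝ᵥ v := fun i => by
    simpa [dotProduct, sq] using
      Finset.single_le_sum (fun j _ => mul_self_nonneg (v j)) (Finset.mem_univ i)
  have hnorm : ‖v‖ ≤ √(v ⬝ᵥ v) :=
    (pi_norm_le_iff_of_nonneg (Real.sqrt_nonneg _)).2 fun i => Real.abs_le_sqrt (hcoord i)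
  calc ‖v‖ ^ 2 ≤ √(v ⬝ᵥ v) ^ 2 := by gcongr
    _ = v ⬝ᵥ v := Real.sq_sqrt (Finset.sum_nonneg fun j _ => mul_self_nonneg (v j))

lemma norm_le_dotProduct_inv_norm_smul {ι : Type*} [Fintype ι] (v : ι → ℝ) :
    ‖v‖ ≤ v ⬝ᵥ (‖v‖⁻¹ • v) := by
  rw [dotProduct_smul, smul_eq_mul]
  rcases (norm_nonneg v).eq_or_lt with hv | hv
  · simp [← hv]
  · rw [le_inv_mul_iff₀ hv, ← sq]
    exact sq_norm_le_dotProduct_self v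

lemma rpow_max_one_le (p : ℝ) {a : ℝ} (ha : 0 ≤ a) : max a 1 ^ p ≤ 1 + a ^ p := by
  rcases le_total a 1 with h | h
  · rw [max_eq_right h, Real.one_rpow]
    linarith [Real.rpow_nonneg ha p]
  · rw [max_eq_left h]
    linarith

theorem W0_Icvbis_general (p : ℝ)
    (W : Matrix (Fin 3) (Fin 3) ℝ → ℝ≥0∞)
    (hIcv : ∀ δ : ℝ, 0 < δ → ∃ c : ℝ, 0 < c ∧ ∀ F : Matrix (Fin 3) (Fin 3) ℝ,
      δ ≤ F.det → W F ≤ ENNReal.ofReal (c * (1 + ‖F‖ ^ p))) :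
    ∀ δ : ℝ, 0 < δ → ∃ c : ℝ, 0 < c ∧ ∀ ξ : Matrix (Fin 3) (Fin 2) ℝ,
      δ ≤ ‖crossProduct (fun i => ξ i 0) (fun i => ξ i 1)‖ →
      W0 W ξ ≤ ENNReal.ofReal (c * (1 + ‖ξ‖ ^ p)) := by
  intro δ hδ
  obtain ⟨c, hc, hW⟩ := hIcv δ hδ
  refine ⟨2 * c, by positivity, fun ξ hξ => ?_⟩
  set v := crossProduct (fun i => ξ i 0) (fun i => ξ i 1)
  -- Normalising the normal `v` in the sup norm gives `det (ξ|ζ) ≥ ‖v‖` and `‖(ξ|ζ)‖ = max ‖ξ‖ 1`.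
  set ζ := ‖v‖⁻¹ • v with hζ
  have hv : v ≠ 0 := norm_pos_iff.1 (hδ.trans_le hξ)
  have hdet : δ ≤ (juxt ξ ζ).det := by
    rw [det_juxt]
    exact hξ.trans (norm_le_dotProduct_inv_norm_smul v)
  have hnorm : ‖juxt ξ ζ‖ ^ p ≤ 1 + ‖ξ‖ ^ p := by
    rw [norm_juxt, hζ, norm_smul, norm_inv, norm_norm, inv_mul_cancel₀ (norm_ne_zero_iff.2 hv)]
    exact rpow_max_one_le p (norm_nonneg ξ)
  calc W0 W ξ ≤ W (juxt ξ ζ) := iInf_le _ ζ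
    _ ≤ ENNReal.ofReal (c * (1 + ‖juxt ξ ζ‖ ^ p)) := hW _ hdet
    _ ≤ ENNReal.ofReal (2 * c * (1 + ‖ξ‖ ^ p)) := by
      gcongr ENNReal.ofReal ?_
      nlinarith [Real.rpow_nonneg (norm_nonneg ξ) p]

/-- Lemma 2.2(iii): if `W` satisfies (Icv) then `W₀` satisfies (Icvbis). -/
theorem W0_Icvbis (p C : ℝ) (hp : 1 < p) (hC : 0 < C)
    (W : Matrix (Fin 3) (Fin 3) ℝ → ℝ≥0∞)
    (hWcont : Continuous W)
    (hWcoer : ∀ F : Matrix (Fin 3) (Fin 3) ℝ, ENNReal.ofReal (C * ‖F‖ ^ p) ≤ W F)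
    (hIcv : ∀ δ : ℝ, 0 < δ → ∃ c : ℝ, 0 < c ∧ ∀ F : Matrix (Fin 3) (Fin 3) ℝ,
      δ ≤ F.det → W F ≤ ENNReal.ofReal (c * (1 + ‖F‖ ^ p))) :
    ∀ δ : ℝ, 0 < δ → ∃ c : ℝ, 0 < c ∧ ∀ ξ : Matrix (Fin 3) (Fin 2) ℝ,
      δ ≤ ‖crossProduct (fun i => ξ i 0) (fun i => ξ i 1)‖ →
      W0 W ξ ≤ ENNReal.ofReal (c * (1 + ‖ξ‖ ^ p)) :=
  W0_Icvbis_general p W hIcv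
end
end

section
/- Let Γ : Σ̄ ⇉ ℝ³ be a multifunction and f : Σ̄ × ℝ³ → [0,+∞]. Assume: (H1) f is a Carathéodory integrand (f(·,ζ) is measurable for each ζ and f(x,·) is continuous for each x); (H2) Γ is nonempty-valued, convex-valued, closed-valued and lower semicontinuous; (H3) the set C(Σ̄;Γ) of continuous selections of Γ is nonempty, and for every φ, φ̂ ∈ C(Σ̄;Γ), ∫_Σ max_{α∈[0,1]} f(x, αφ(x)+(1-α)φ̂(x)) dx < +∞. Then inf_{φ ∈ C(Σ̄;Γ)} ∫_Σ f(x,φ(x)) dx = ∫_Σ inf_{ζ∈Γ(x)} f(x,ζ) dx. -/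
/-!
By Michael's selection theorem (successive approximate selections built from partitions of
unity, converging uniformly on the compact set `closure S`), through every point `(x, ζ)` with
`ζ ∈ Γ x` passes a continuous selection of `Γ`. The continuous selections form a separable
subspace of `C(closure S, ℝ³)`, so a dense sequence `φₙ` of them already satisfies
`⨅ₙ f x (φₙ x) = ⨅_{ζ ∈ Γ x} f x ζ`.

It remains to approach `∫ min (f ∘ φ₀, …, f ∘ φ_N)` by integrals of single selections. Two
selections are glued by a continuous `[0, 1]`-valued Urysohn function which, outside a set of
small measure (inner regularity), picks the one with the smaller integrand. On the exceptional
set the glued selection stays on the segment between the two, where the integrand is dominated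
by the integrable supremum of (H₃), so it contributes little by absolute continuity of the
integral. Monotone convergence, once more with (H₃) for finiteness, concludes.
-/

open scoped ENNReal
open MeasureTheory Filter

noncomputable section

attribute [local instance] Matrix.normedAddCommGroup

open Metric Set Topology

lemma lowerHemicontinuousOn_of_seq {Y E : Type*} [TopologicalSpace Y] [FirstCountableTopology Y]
    [TopologicalSpace E] {K : Set Y} {Γ : Y → Set E}
    (h : ∀ U : Set E, IsClosed U → ∀ x ∈ K, ∀ v : ℕ → Y, (∀ n, v n ∈ K) →
      Tendsto v atTop (𝓝 x) → (∀ n, Γ (v n) ⊆ U) → Γ x ⊆ U) :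
    LowerHemicontinuousOn Γ K := by
  refine lowerHemicontinuous_restrict_iff.1 <| lowerHemicontinuous_iff_isClosed_preimage_Iic.2
    fun U hU => IsSeqClosed.isClosed fun v x hv hvx => ?_
  exact h U hU x x.2 (fun n => v n) (fun n => (v n).2) (tendsto_subtype_rng.1 hvx) hv

section Selection

variable {X E : Type*} [TopologicalSpace X] [NormedAddCommGroup E] {Ψ : X → Set E}

lemma LowerHemicontinuous.inter_ball (hΨ : LowerHemicontinuous Ψ) {c : X → E}
    (hc : Continuous c) (r : ℝ) : LowerHemicontinuous fun x => Ψ x ∩ ball (c x) r :=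
  hΨ.inter_hasOpenCGraph <| isOpen_lt (continuous_snd.dist (hc.comp continuous_fst))
    continuous_const

lemma LowerHemicontinuous.update_singleton [T1Space X] [DecidableEq X]
    (hΨ : LowerHemicontinuous Ψ) {x₀ : X} {ζ : E} (hζ : ζ ∈ Ψ x₀) :
    LowerHemicontinuous (Function.update Ψ x₀ {ζ}) := by
  rw [lowerHemicontinuous_iff_isOpen_inter_nonempty] at hΨ ⊢
  intro U hU
  by_cases hζU : ζ ∈ U
  · convert hΨ U hU using 1
    ext x
    rcases eq_or_ne x x₀ with rfl | hx
    · simpa [hζU] using ⟨ζ, hζ, hζU⟩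
    · simp [hx]
  · convert (hΨ U hU).sdiff (isClosed_singleton (x := x₀)) using 1
    ext x
    rcases eq_or_ne x x₀ with rfl | hx
    · simp [hζU]
    · simp [hx]

variable [NormedSpace ℝ E] [NormalSpace X] [ParacompactSpace X]

lemma LowerHemicontinuous.exists_continuous_mem_thickening (hΨ : LowerHemicontinuous Ψ)
    (hne : ∀ x, (Ψ x).Nonempty) (hconv : ∀ x, Convex ℝ (Ψ x)) {ε : ℝ} (hε : 0 < ε) :
    ∃ g : C(X, E), ∀ x, g x ∈ thickening ε (Ψ x) := by
  refine exists_continuous_forall_mem_convex_of_local_const (fun x => (hconv x).thickening ε)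
    fun x => ?_
  obtain ⟨ζ, hζ⟩ := hne x
  refine ⟨ζ, ?_⟩
  filter_upwards [(lowerHemicontinuous_iff_isOpen_inter_nonempty.1 hΨ _ isOpen_ball).mem_nhds
    ⟨ζ, hζ, mem_ball_self hε⟩] with y ⟨η, hη, hηζ⟩
  exact mem_thickening_iff.2 ⟨η, hη, mem_ball_comm.1 hηζ⟩

lemma LowerHemicontinuous.exists_continuous_mem_thickening_dist_lt
    (hΨ : LowerHemicontinuous Ψ) (hconv : ∀ x, Convex ℝ (Ψ x)) {g : C(X, E)} {r : ℝ}
    (hg : ∀ x, g x ∈ thickening r (Ψ x)) {r' : ℝ} (hr' : 0 < r') :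
    ∃ g' : C(X, E), (∀ x, g' x ∈ thickening r' (Ψ x)) ∧ ∀ x, dist (g' x) (g x) < r' + r := by
  obtain ⟨g', hg'⟩ := (hΨ.inter_ball g.continuous r).exists_continuous_mem_thickening
    (fun x => by simpa [mem_thickening_iff, inter_comm, Set.Nonempty, dist_comm] using hg x)
    (fun x => (hconv x).inter (convex_ball _ _)) hr'
  refine ⟨g', fun x => thickening_subset_of_subset _ inter_subset_left (hg' x), fun x => ?_⟩
  obtain ⟨η, ⟨-, hη⟩, hg'η⟩ := mem_thickening_iff.1 (hg' x)
  exact (dist_triangle _ η _).trans_lt (add_lt_add hg'η hη)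

theorem LowerHemicontinuous.exists_continuous_selection [CompactSpace X] [CompleteSpace E]
    (hΨ : LowerHemicontinuous Ψ) (hne : ∀ x, (Ψ x).Nonempty) (hconv : ∀ x, Convex ℝ (Ψ x))
    (hclosed : ∀ x, IsClosed (Ψ x)) : ∃ g : C(X, E), ∀ x, g x ∈ Ψ x := by
  set r : ℕ → ℝ := fun n => 2⁻¹ ^ n
  set P : ℕ → Set C(X, E) := fun n => {g | ∀ x, g x ∈ thickening (r n) (Ψ x)}
  have step : ∀ n, ∀ g ∈ P n, ∃ g' ∈ P (n + 1), dist g' g ≤ 2 * r n := by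
    intro n g hg
    obtain ⟨g', hg', hdist⟩ := hΨ.exists_continuous_mem_thickening_dist_lt hconv hg
      (r' := r (n + 1)) (by positivity)
    refine ⟨g', hg', (ContinuousMap.dist_le (by positivity)).2 fun x => (hdist x).le.trans ?_⟩
    simp only [r, pow_succ]
    linarith [pow_pos (by norm_num : (0 : ℝ) < 2⁻¹) n]
  choose! next hnext_mem hnext_dist using step
  obtain ⟨g₀, hg₀⟩ := hΨ.exists_continuous_mem_thickening hne hconv (ε := r 0) (by positivity)
  set u : ℕ → C(X, E) := fun n => Nat.rec g₀ next n
  have hu : ∀ n, u n ∈ P n := fun n => by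
    induction n with
    | zero => exact hg₀
    | succ n ih => exact hnext_mem n _ ih
  have hcauchy : CauchySeq u := cauchySeq_of_le_geometric 2⁻¹ 2 (by norm_num) fun n => by
    rw [dist_comm]; exact hnext_dist n _ (hu n)
  obtain ⟨g, hg⟩ := cauchySeq_tendsto_of_complete hcauchy
  refine ⟨g, fun x => (hclosed x).closure_subset (Metric.mem_closure_iff.2 fun ε hε => ?_)⟩
  obtain ⟨n, hn_near, hn_small⟩ := ((hg.eventually (ball_mem_nhds g (half_pos hε))).and
    (tendsto_pow_atTop_nhds_zero_of_lt_one (by norm_num : (0 : ℝ) ≤ 2⁻¹) (by norm_num)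
      |>.eventually (gt_mem_nhds (by positivity : (0 : ℝ) < ε / 2)))).exists
  obtain ⟨η, hη, hdist⟩ := mem_thickening_iff.1 (hu n x)
  refine ⟨η, hη, ?_⟩
  calc dist (g x) η ≤ dist (g x) (u n x) + dist (u n x) η := dist_triangle _ _ _
    _ < ε / 2 + ε / 2 := add_lt_add_of_le_of_lt
        ((ContinuousMap.dist_apply_le_dist x).trans (mem_ball'.1 hn_near).le)
        (hdist.trans hn_small)
    _ = ε := add_halves ε

theorem LowerHemicontinuous.exists_continuous_selection_apply_eq [CompactSpace X] [T1Space X]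
    [CompleteSpace E] (hΨ : LowerHemicontinuous Ψ) (hne : ∀ x, (Ψ x).Nonempty)
    (hconv : ∀ x, Convex ℝ (Ψ x)) (hclosed : ∀ x, IsClosed (Ψ x)) {x₀ : X} {ζ : E}
    (hζ : ζ ∈ Ψ x₀) : ∃ g : C(X, E), (∀ x, g x ∈ Ψ x) ∧ g x₀ = ζ := by
  classical
  obtain ⟨g, hg⟩ := (hΨ.update_singleton hζ).exists_continuous_selection
    (fun x => by rcases eq_or_ne x x₀ with rfl | hx <;> simp [*])
    (fun x => by rcases eq_or_ne x x₀ with rfl | hx <;> simp [convex_singleton, *])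
    (fun x => by rcases eq_or_ne x x₀ with rfl | hx <;> simp [*])
  have hgx₀ : g x₀ = ζ := by simpa using hg x₀
  refine ⟨g, fun x => ?_, hgx₀⟩
  rcases eq_or_ne x x₀ with rfl | hx
  · exact hgx₀ ▸ hζ
  · simpa [hx] using hg x

end Selection

lemma DenseRange.iInf_comp {α β ι : Type*} [TopologicalSpace α] [CompleteLattice β]
    [TopologicalSpace β] [ClosedIciTopology β] {u : ι → α} (hu : DenseRange u) {F : α → β}
    (hF : Continuous F) : ⨅ i, F (u i) = ⨅ a, F a :=
  le_antisymm (le_iInf fun a => hu.induction_on (p := fun a => ⨅ i, F (u i) ≤ F a) a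
      (isClosed_Ici.preimage hF) (iInf_le fun i => F (u i)))
    (le_iInf fun i => iInf_le _ (u i))

/-- The set `C(K; Γ)` of the paper, with selections given as functions on the whole of `Y`. -/
def continuousSelectionsOn {Y E : Type*} [TopologicalSpace Y] [TopologicalSpace E] (K : Set Y)
    (Γ : Y → Set E) : Set (Y → E) :=
  {φ | ContinuousOn φ K ∧ ∀ x ∈ K, φ x ∈ Γ x}

section Selections

variable {Y E β : Type*} [TopologicalSpace Y] [NormedAddCommGroup E] [NormedSpace ℝ E]
  [CompleteLattice β] [TopologicalSpace β] [ClosedIciTopology β]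

theorem LowerHemicontinuous.exists_seq_selection_iInf_eq [CompactSpace Y] [T2Space Y]
    [SecondCountableTopology Y] [CompleteSpace E] [SecondCountableTopology E] {Ψ : Y → Set E}
    (hΨ : LowerHemicontinuous Ψ) (hne : ∀ x, (Ψ x).Nonempty) (hconv : ∀ x, Convex ℝ (Ψ x))
    (hclosed : ∀ x, IsClosed (Ψ x)) {f : Y → E → β} (hf : ∀ x, Continuous (f x)) :
    ∃ u : ℕ → C(Y, E), (∀ n x, u n x ∈ Ψ x) ∧ ∀ x, ⨅ n, f x (u n x) = ⨅ ζ ∈ Ψ x, f x ζ := by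
  have : Nonempty {g : C(Y, E) // ∀ x, g x ∈ Ψ x} :=
    let ⟨g, hg⟩ := hΨ.exists_continuous_selection hne hconv hclosed; ⟨⟨g, hg⟩⟩
  obtain ⟨v, hv⟩ := TopologicalSpace.exists_dense_seq {g : C(Y, E) // ∀ x, g x ∈ Ψ x}
  refine ⟨fun n => v n, fun n => (v n).2, fun x => ?_⟩
  rw [hv.iInf_comp (F := fun g => f x (g.1 x))
    ((hf x).comp ((continuous_eval_const x).comp continuous_subtype_val))]
  refine le_antisymm (le_iInf₂ fun ζ hζ => ?_) (le_iInf fun g => iInf₂_le _ (g.2 x))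
  obtain ⟨g, hg, hgx⟩ := hΨ.exists_continuous_selection_apply_eq hne hconv hclosed hζ
  rw [← hgx]
  exact iInf_le_of_le ⟨g, hg⟩ le_rfl

lemma convexCombination_mem_continuousSelectionsOn {K : Set Y} {Γ : Y → Set E}
    (hconv : ∀ x ∈ K, Convex ℝ (Γ x)) {φ χ : Y → E} (hφ : φ ∈ continuousSelectionsOn K Γ)
    (hχ : χ ∈ continuousSelectionsOn K Γ) (w : C(Y, ℝ)) (hw : ∀ x, w x ∈ Icc 0 1) :
    (fun x => w x • φ x + (1 - w x) • χ x) ∈ continuousSelectionsOn K Γ :=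
  ⟨(w.continuous.continuousOn.smul hφ.1).add
      ((continuous_const.sub w.continuous).continuousOn.smul hχ.1),
    fun x hx => hconv x hx (hφ.2 x hx) (hχ.2 x hx) (hw x).1 (sub_nonneg.2 (hw x).2) (by ring)⟩

theorem LowerHemicontinuousOn.exists_seq_mem_continuousSelectionsOn_iInf_eq [T2Space Y]
    [SecondCountableTopology Y] [CompleteSpace E] [SecondCountableTopology E] {K : Set Y}
    (hK : IsCompact K) {Γ : Y → Set E} (hΓ : LowerHemicontinuousOn Γ K)
    (hne : ∀ x ∈ K, (Γ x).Nonempty) (hconv : ∀ x ∈ K, Convex ℝ (Γ x))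
    (hclosed : ∀ x ∈ K, IsClosed (Γ x)) {f : Y → E → β} (hf : ∀ x ∈ K, Continuous (f x)) :
    ∃ φ : ℕ → Y → E, (∀ n, φ n ∈ continuousSelectionsOn K Γ) ∧
      ∀ x ∈ K, ⨅ n, f x (φ n x) = ⨅ ζ ∈ Γ x, f x ζ := by
  have : CompactSpace K := isCompact_iff_compactSpace.1 hK
  obtain ⟨u, hu_mem, hu_iInf⟩ :=
    (lowerHemicontinuous_restrict_iff.2 hΓ).exists_seq_selection_iInf_eq (fun x => hne x x.2)
      (fun x => hconv x x.2) (fun x => hclosed x x.2) (f := fun x => f x) fun x => hf x x.2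
  have hext : ∀ n, ∀ x : K, Function.extend Subtype.val (u n) 0 x = u n x :=
    fun n => Subtype.val_injective.extend_apply _ _
  refine ⟨fun n => Function.extend Subtype.val (u n) 0, fun n => ⟨?_, fun x hx => ?_⟩,
    fun x hx => by simpa [hext _ ⟨x, hx⟩] using hu_iInf ⟨x, hx⟩⟩
  · exact continuousOn_iff_continuous_domRestrict.2 ((funext (hext n) :
      K.domRestrict (Function.extend Subtype.val (u n) 0) = u n) ▸ (u n).continuous)
  · simpa [hext n ⟨x, hx⟩] using hu_mem n ⟨x, hx⟩

end Selections

lemma AEMeasurable.caratheodory_apply {α E : Type*} [MeasurableSpace α] {μ : Measure α}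
    [TopologicalSpace E] [TopologicalSpace.MetrizableSpace E] [SecondCountableTopology E]
    [MeasurableSpace E] [OpensMeasurableSpace E] {φ : α → E} (hφ : AEMeasurable φ μ)
    {K : Set α} (hK : MeasurableSet K) (hμK : ∀ᵐ x ∂μ, x ∈ K) {f : α → E → ℝ≥0∞}
    (hf_meas : ∀ ζ, Measurable fun x => f x ζ) (hf_cont : ∀ x ∈ K, Continuous (f x)) :
    AEMeasurable (fun x => f x (φ x)) μ := by
  have hmeas : Measurable (Function.uncurry fun ζ x => K.indicator (f · ζ) x) :=
    measurable_uncurry_of_continuous_of_measurable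
      (fun x => by
        by_cases hx : x ∈ K
        · simpa [indicator_of_mem hx] using hf_cont x hx
        · simpa [indicator_of_notMem hx] using continuous_const)
      fun ζ => (hf_meas ζ).indicator hK
  refine (hmeas.comp_aemeasurable (hφ.prodMk aemeasurable_id)).congr ?_
  filter_upwards [hμK] with x hx
  simp [indicator_of_mem hx]

lemma min_tsub_min_le {α : Type*} [AddCommMonoid α] [LinearOrder α] [CanonicallyOrderedAdd α]
    [Sub α] [OrderedSub α] (a b c : α) : min a c - min a b ≤ c - b := by
  rcases le_total a b with h | h
  · rw [min_eq_left h, tsub_eq_zero_of_le (min_le_left a c)]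
    exact zero_le
  · rw [min_eq_right h]
    exact tsub_le_tsub_right (min_le_right a c) b

section SmallExcess

variable {X E : Type*} [MeasurableSpace X]

def HasSmallExcess (μ : Measure X) (F : X → E → ℝ≥0∞) (𝒞 : Set (X → E)) (v : X → ℝ≥0∞) :
    Prop :=
  ∀ ε ≠ 0, ∃ ψ ∈ 𝒞, ∫⁻ x, (F x (ψ x) - v x) ∂μ ≤ ε

variable {μ : Measure X} {F : X → E → ℝ≥0∞} {𝒞 : Set (X → E)}

lemma hasSmallExcess_of_mem {φ : X → E} (hφ : φ ∈ 𝒞) :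
    HasSmallExcess μ F 𝒞 fun x => F x (φ x) :=
  fun ε _ => ⟨φ, hφ, by simp⟩

lemma HasSmallExcess.iInf_lintegral_le {v : X → ℝ≥0∞} (hv : HasSmallExcess μ F 𝒞 v)
    (hv_meas : AEMeasurable v μ) : ⨅ ψ : 𝒞, ∫⁻ x, F x (ψ.1 x) ∂μ ≤ ∫⁻ x, v x ∂μ := by
  refine ENNReal.le_of_forall_pos_le_add fun ε hε _ => ?_
  obtain ⟨ψ, hψ, hψv⟩ := hv ε (by simpa using hε.ne')
  calc ⨅ ψ : 𝒞, ∫⁻ x, F x (ψ.1 x) ∂μ ≤ ∫⁻ x, F x (ψ x) ∂μ := iInf_le_of_le ⟨ψ, hψ⟩ le_rfl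
    _ ≤ ∫⁻ x, v x + (F x (ψ x) - v x) ∂μ := lintegral_mono fun x => le_add_tsub
    _ = ∫⁻ x, v x ∂μ + ∫⁻ x, (F x (ψ x) - v x) ∂μ := lintegral_add_left' hv_meas _
    _ ≤ ∫⁻ x, v x ∂μ + ε := add_le_add le_rfl hψv

end SmallExcess

section Patching

variable {X E : Type*} [TopologicalSpace X] [NormalSpace X] [MeasurableSpace X]
  [OpensMeasurableSpace X] {μ : Measure X} [IsFiniteMeasure μ] [μ.WeaklyRegular]

lemma MeasurableSet.exists_continuous_eqOn_indicator {A : Set X} (hA : MeasurableSet A)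
    {δ : ℝ≥0∞} (hδ : δ ≠ 0) : ∃ w : C(X, ℝ), (∀ x, w x ∈ Icc 0 1) ∧
      ∃ R, MeasurableSet R ∧ μ R < δ ∧ EqOn w (A.indicator 1) Rᶜ := by
  obtain ⟨T, hTA, hT, hμT⟩ := hA.exists_isClosed_sdiff_lt (measure_ne_top μ A)
    (ENNReal.half_pos hδ).ne'
  obtain ⟨T', hT'A, hT', hμT'⟩ := hA.compl.exists_isClosed_sdiff_lt (measure_ne_top μ Aᶜ)
    (ENNReal.half_pos hδ).ne'
  obtain ⟨w, hw0, hw1, hw01⟩ := exists_continuous_zero_one_of_isClosed hT' hT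
    (disjoint_compl_left.mono hT'A hTA)
  refine ⟨w, hw01, (T ∪ T')ᶜ, (hT.union hT').measurableSet.compl, ?_, ?_⟩
  · calc μ (T ∪ T')ᶜ ≤ μ ((A \ T) ∪ (Aᶜ \ T')) := measure_mono fun x hx => by
          by_cases hxA : x ∈ A
          · exact Or.inl ⟨hxA, fun h => hx (Or.inl h)⟩
          · exact Or.inr ⟨hxA, fun h => hx (Or.inr h)⟩
      _ ≤ μ (A \ T) + μ (Aᶜ \ T') := measure_union_le _ _
      _ < δ / 2 + δ / 2 := ENNReal.add_lt_add hμT hμT'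
      _ = δ := ENNReal.add_halves δ
  · intro x hx
    rw [compl_compl] at hx
    rcases hx with hxT | hxT'
    · simp [hw1 hxT, indicator_of_mem (hTA hxT)]
    · simp [hw0 hxT', indicator_of_notMem (hT'A hxT')]

variable [AddCommGroup E] [Module ℝ E] {F : X → E → ℝ≥0∞} {𝒞 : Set (X → E)}

lemma HasSmallExcess.min_of_mem
    (h𝒞 : ∀ φ ∈ 𝒞, ∀ χ ∈ 𝒞, ∀ w : C(X, ℝ), (∀ x, w x ∈ Icc 0 1) →
      (fun x => w x • φ x + (1 - w x) • χ x) ∈ 𝒞)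
    (hF : ∀ φ ∈ 𝒞, AEMeasurable (fun x => F x (φ x)) μ)
    (hint : ∀ φ ∈ 𝒞, ∀ χ ∈ 𝒞, ∫⁻ x, ⨆ α ∈ Icc (0 : ℝ) 1, F x (α • φ x + (1 - α) • χ x) ∂μ < ⊤)
    {v : X → ℝ≥0∞} (hv : HasSmallExcess μ F 𝒞 v) (hv_meas : AEMeasurable v μ) {φ : X → E}
    (hφ : φ ∈ 𝒞) : HasSmallExcess μ F 𝒞 fun x => min (F x (φ x)) (v x) := by
  intro ε hε
  obtain ⟨χ, hχ, hχv⟩ := hv (ε / 2) (ENNReal.half_pos hε).ne'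
  set G : X → ℝ≥0∞ := fun x => ⨆ α ∈ Icc (0 : ℝ) 1, F x (α • φ x + (1 - α) • χ x)
  obtain ⟨δ, hδ, hδG⟩ := exists_pos_setLIntegral_lt_of_measure_lt (hint φ hφ χ hχ).ne
    (ENNReal.half_pos hε).ne'
  obtain ⟨w, hw01, R, hR, hμR, hwR⟩ := (measurableSet_le (hF φ hφ).measurable_mk
    (hF χ hχ).measurable_mk).exists_continuous_eqOn_indicator (μ := μ) hδ.ne'
  refine ⟨_, h𝒞 φ hφ χ hχ w hw01, ?_⟩
  -- off `R` the glued integrand is `min (F x (φ x)) (F x (χ x))`; on `R` it is below `G`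
  have hpatch : ∀ᵐ x ∂μ, F x (w x • φ x + (1 - w x) • χ x) - min (F x (φ x)) (v x) ≤
      (F x (χ x) - v x) + R.indicator G x := by
    filter_upwards [(hF φ hφ).ae_eq_mk, (hF χ hχ).ae_eq_mk] with x hφx hχx
    by_cases hxR : x ∈ R
    · rw [indicator_of_mem hxR]
      exact tsub_le_self.trans (le_add_left (le_iSup₂_of_le (w x) (hw01 x) le_rfl))
    · rw [indicator_of_notMem hxR, add_zero]
      have hw := hwR hxR
      simp only [indicator, mem_ofPred_eq, ← hφx, ← hχx, Pi.one_apply] at hw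
      have hψ : F x (w x • φ x + (1 - w x) • χ x) = min (F x (φ x)) (F x (χ x)) := by
        split_ifs at hw with hle
        · simp [hw, min_eq_left hle]
        · simp [hw, min_eq_right (not_le.1 hle).le]
      exact hψ ▸ min_tsub_min_le _ _ _
  calc ∫⁻ x, (F x (w x • φ x + (1 - w x) • χ x) - min (F x (φ x)) (v x)) ∂μ
      ≤ ∫⁻ x, (F x (χ x) - v x) + R.indicator G x ∂μ := lintegral_mono_ae hpatch
    _ = ∫⁻ x, (F x (χ x) - v x) ∂μ + ∫⁻ x in R, G x ∂μ := by
        rw [lintegral_add_left' (f := fun x => F x (χ x) - v x) ((hF χ hχ).sub hv_meas),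
          lintegral_indicator hR]
    _ ≤ ε / 2 + ε / 2 := add_le_add hχv (hδG R hμR).le
    _ = ε := ENNReal.add_halves ε

theorem iInf_lintegral_le_lintegral_iInf
    (h𝒞 : ∀ φ ∈ 𝒞, ∀ χ ∈ 𝒞, ∀ w : C(X, ℝ), (∀ x, w x ∈ Icc 0 1) →
      (fun x => w x • φ x + (1 - w x) • χ x) ∈ 𝒞)
    (hF : ∀ φ ∈ 𝒞, AEMeasurable (fun x => F x (φ x)) μ)
    (hint : ∀ φ ∈ 𝒞, ∀ χ ∈ 𝒞, ∫⁻ x, ⨆ α ∈ Icc (0 : ℝ) 1, F x (α • φ x + (1 - α) • χ x) ∂μ < ⊤)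
    {φ : ℕ → X → E} (hφ : ∀ n, φ n ∈ 𝒞) :
    ⨅ ψ : 𝒞, ∫⁻ x, F x (ψ.1 x) ∂μ ≤ ∫⁻ x, ⨅ n, F x (φ n x) ∂μ := by
  set v : ℕ → X → ℝ≥0∞ := fun N x => ⨅ k ≤ N, F x (φ k x)
  have hv_meas : ∀ N, AEMeasurable (v N) μ :=
    fun N => AEMeasurable.iInf fun k => AEMeasurable.iInf fun _ => hF _ (hφ k)
  have hv_small : ∀ N, HasSmallExcess μ F 𝒞 (v N) := by
    intro N
    induction N with
    | zero => simpa [v] using hasSmallExcess_of_mem (hφ 0)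
    | succ N ih =>
      convert ih.min_of_mem h𝒞 hF hint (hv_meas N) (hφ (N + 1)) using 2 with x
      simp only [v, Nat.iInf_le_succ, inf_comm]
  have hv_fin : ∫⁻ x, v 0 x ∂μ ≠ ⊤ := by
    refine ne_top_of_le_ne_top (hint _ (hφ 0) _ (hφ 0)).ne (lintegral_mono fun x => ?_)
    simpa [v] using le_iSup₂_of_le (f := fun α (_ : α ∈ Icc (0 : ℝ) 1) =>
      F x (α • φ 0 x + (1 - α) • φ 0 x)) 1 (by simp) le_rfl
  have hv_iInf : ∀ x, ⨅ N, v N x = ⨅ n, F x (φ n x) := fun x =>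
    le_antisymm
      (le_iInf fun n => iInf_le_of_le n (iInf₂_le (f := fun k (_ : k ≤ n) => F x (φ k x)) n le_rfl))
      (le_iInf fun N => le_iInf₂ fun k _ => iInf_le _ k)
  calc ⨅ ψ : 𝒞, ∫⁻ x, F x (ψ.1 x) ∂μ ≤ ⨅ N, ∫⁻ x, v N x ∂μ :=
        le_iInf fun N => (hv_small N).iInf_lintegral_le (hv_meas N)
    _ = ∫⁻ x, ⨅ n, F x (φ n x) ∂μ := by
        rw [← lintegral_iInf' hv_meas (ae_of_all _ fun x N M hNM => biInf_mono fun k hk =>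
          hk.trans hNM) hv_fin]
        simp only [hv_iInf]

end Patching

theorem inf_lintegral_eq_lintegral_inf_general
    (S : Set (Fin 2 → ℝ)) (hSbdd : Bornology.IsBounded S)
    (Γ : (Fin 2 → ℝ) → Set (Fin 3 → ℝ))
    (f : (Fin 2 → ℝ) → (Fin 3 → ℝ) → ℝ≥0∞)
    -- (H₁) : f is a Carathéodory integrand
    (hf_meas : ∀ ζ : Fin 3 → ℝ, Measurable fun x => f x ζ)
    (hf_cont : ∀ x ∈ closure S, Continuous (f x))
    -- (H₂) : Γ is a nonempty convex closed-valued lower semicontinuous multifunction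
    (hΓ : ∀ x ∈ closure S, (Γ x).Nonempty ∧ Convex ℝ (Γ x) ∧ IsClosed (Γ x))
    (hΓlsc : ∀ X : Set (Fin 3 → ℝ), IsClosed X → ∀ x ∈ closure S, ∀ u : ℕ → (Fin 2 → ℝ),
      (∀ n, u n ∈ closure S) → Tendsto u atTop (nhds x) →
      (∀ n, Γ (u n) ⊆ X) → Γ x ⊆ X)
    -- (H₃)
    (hint : ∀ φ φ' : (Fin 2 → ℝ) → (Fin 3 → ℝ),
      (ContinuousOn φ (closure S) ∧ ∀ x ∈ closure S, φ x ∈ Γ x) →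
      (ContinuousOn φ' (closure S) ∧ ∀ x ∈ closure S, φ' x ∈ Γ x) →
      (∫⁻ x in S, ⨆ α ∈ Set.Icc (0:ℝ) 1, f x (α • φ x + (1 - α) • φ' x)) < ⊤) :
    (⨅ φ : {φ : (Fin 2 → ℝ) → (Fin 3 → ℝ) //
        ContinuousOn φ (closure S) ∧ ∀ x ∈ closure S, φ x ∈ Γ x},
      ∫⁻ x in S, f x (φ.1 x)) = ∫⁻ x in S, ⨅ ζ ∈ Γ x, f x ζ := by
  have hK : MeasurableSet (closure S) := isClosed_closure.measurableSet
  have : IsFiniteMeasure (volume.restrict S) :=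
    isFiniteMeasure_restrict.2 hSbdd.measure_lt_top.ne
  have hSK : ∀ᵐ x ∂volume.restrict S, x ∈ closure S :=
    ae_restrict_of_ae_restrict_of_subset subset_closure (ae_restrict_mem hK)
  obtain ⟨φ, hφ, hφ_iInf⟩ :=
    (lowerHemicontinuousOn_of_seq hΓlsc).exists_seq_mem_continuousSelectionsOn_iInf_eq
      hSbdd.isCompact_closure (fun x hx => (hΓ x hx).1) (fun x hx => (hΓ x hx).2.1)
      (fun x hx => (hΓ x hx).2.2) hf_cont
  refine le_antisymm ?_ (le_iInf fun ψ => lintegral_mono_ae (hSK.mono fun x hx =>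
    iInf₂_le (ψ.1 x) (ψ.2.2 x hx)))
  calc _ ≤ ∫⁻ x in S, ⨅ n, f x (φ n x) :=
        iInf_lintegral_le_lintegral_iInf (𝒞 := continuousSelectionsOn (closure S) Γ)
          (fun _ hφ _ hχ => convexCombination_mem_continuousSelectionsOn
            (fun x hx => (hΓ x hx).2.1) hφ hχ)
          (fun _ hφ => (hφ.1.aemeasurable hK |>.mono_measure
            (Measure.restrict_mono subset_closure le_rfl)).caratheodory_apply hK hSK hf_meas
              hf_cont)
          (fun φ hφ χ hχ => hint φ χ hφ hχ) hφ
    _ = ∫⁻ x in S, ⨅ ζ ∈ Γ x, f x ζ := lintegral_congr_ae (hSK.mono hφ_iInf)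

/-- Theorem 3.4 (interchange of infimum and integral, from [AHM]):
under (H₁) (Carathéodory integrand), (H₂) (nonempty convex closed valued lower
semicontinuous multifunction) and (H₃), the infimum over continuous selections of `Γ`
of the integral equals the integral of the pointwise infimum. -/
theorem inf_lintegral_eq_lintegral_inf
    (S : Set (Fin 2 → ℝ)) (hSopen : IsOpen S) (hSbdd : Bornology.IsBounded S)
    (Γ : (Fin 2 → ℝ) → Set (Fin 3 → ℝ))
    (f : (Fin 2 → ℝ) → (Fin 3 → ℝ) → ℝ≥0∞)
    -- (H₁) : f is a Carathéodory integrand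
    (hf_meas : ∀ ζ : Fin 3 → ℝ, Measurable fun x => f x ζ)
    (hf_cont : ∀ x ∈ closure S, Continuous (f x))
    -- (H₂) : Γ is a nonempty convex closed-valued lower semicontinuous multifunction
    (hΓ : ∀ x ∈ closure S, (Γ x).Nonempty ∧ Convex ℝ (Γ x) ∧ IsClosed (Γ x))
    (hΓlsc : ∀ X : Set (Fin 3 → ℝ), IsClosed X → ∀ x ∈ closure S, ∀ u : ℕ → (Fin 2 → ℝ),
      (∀ n, u n ∈ closure S) → Tendsto u atTop (nhds x) →
      (∀ n, Γ (u n) ⊆ X) → Γ x ⊆ X)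
    -- (H₃)
    (hsel : ∃ φ : (Fin 2 → ℝ) → (Fin 3 → ℝ),
      ContinuousOn φ (closure S) ∧ ∀ x ∈ closure S, φ x ∈ Γ x)
    (hint : ∀ φ φ' : (Fin 2 → ℝ) → (Fin 3 → ℝ),
      (ContinuousOn φ (closure S) ∧ ∀ x ∈ closure S, φ x ∈ Γ x) →
      (ContinuousOn φ' (closure S) ∧ ∀ x ∈ closure S, φ' x ∈ Γ x) →
      (∫⁻ x in S, ⨆ α ∈ Set.Icc (0:ℝ) 1, f x (α • φ x + (1 - α) • φ' x)) < ⊤) :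
    (⨅ φ : {φ : (Fin 2 → ℝ) → (Fin 3 → ℝ) //
        ContinuousOn φ (closure S) ∧ ∀ x ∈ closure S, φ x ∈ Γ x},
      ∫⁻ x in S, f x (φ.1 x)) = ∫⁻ x in S, ⨅ ζ ∈ Γ x, f x ζ :=
  inf_lintegral_eq_lintegral_inf_general S hSbdd Γ f hf_meas hf_cont hΓ hΓlsc hint
end
end

section
/- Assume W satisfies (Icv): for every δ > 0 there exists c_δ > 0 such that det F ≥ δ implies W(F) ≤ c_δ(1+|F|^p). Let v ∈ C¹_*(Σ̄;ℝ³) and j ≥ 1. Then inf_{φ ∈ C(Σ̄;Λ_v^j)} ∫_Σ W(∇v(x)|φ(x)) dx = ∫_Σ inf_{ζ∈Λ_v^j(x)} W(∇v(x)|ζ) dx, where Λ_v^j(x) := {ζ ∈ ℝ³ : det(∇v(x)|ζ) ≥ 1/j} and C(Σ̄;Λ_v^j) is the set of continuous selections of Λ_v^j. -/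
open scoped ENNReal
open MeasureTheory Filter

noncomputable section

attribute [local instance] Matrix.normedAddCommGroup

/-- The 3×2 Jacobian matrix `∇v(x)` of a map `v : ℝ² → ℝ³`. -/
def grad (v : (Fin 2 → ℝ) → (Fin 3 → ℝ)) (x : Fin 2 → ℝ) : Matrix (Fin 3) (Fin 2) ℝ :=
  Matrix.of fun i j => fderiv ℝ v x (Pi.single j 1) i

/-- `v ∈ C¹_*(Σ̄;ℝ³)`: `v` is (the restriction to `Σ̄` of) a `C¹` map from `ℝ²` to `ℝ³`
with `∂₁v(x) ∧ ∂₂v(x) ≠ 0` (cross product) for all `x ∈ Σ̄`. -/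
def C1star (S : Set (Fin 2 → ℝ)) (v : (Fin 2 → ℝ) → (Fin 3 → ℝ)) : Prop :=
  ContDiff ℝ 1 v ∧
    ∀ x ∈ closure S, crossProduct (fun i => grad v x i 0) (fun i => grad v x i 1) ≠ 0

/-- The multifunction `Λ_v^j(x) = {ζ ∈ ℝ³ : det(∇v(x)|ζ) ≥ 1/j}`. -/
def Lam (v : (Fin 2 → ℝ) → (Fin 3 → ℝ)) (j : ℕ) (x : Fin 2 → ℝ) : Set (Fin 3 → ℝ) :=
  {ζ | (1 : ℝ) / j ≤ (juxt (grad v x) ζ).det}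


namespace Lem32aux

lemma juxt_last (ξ : Matrix (Fin 3) (Fin 2) ℝ) (ζ : Fin 3 → ℝ) (i : Fin 3) :
    juxt ξ ζ i (Fin.last 2) = ζ i :=
  Fin.lastCases_last (motive := fun _ => ℝ)
lemma juxt_cast (ξ : Matrix (Fin 3) (Fin 2) ℝ) (ζ : Fin 3 → ℝ) (i : Fin 3) (jj : Fin 2) :
    juxt ξ ζ i (Fin.castSucc jj) = ξ i jj :=
  Fin.lastCases_castSucc (motive := fun _ => ℝ) jj

lemma juxt0 (ξ : Matrix (Fin 3) (Fin 2) ℝ) (ζ : Fin 3 → ℝ) (i : Fin 3) : juxt ξ ζ i 0 = ξ i 0 :=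
  juxt_cast ξ ζ i 0
lemma juxt1 (ξ : Matrix (Fin 3) (Fin 2) ℝ) (ζ : Fin 3 → ℝ) (i : Fin 3) : juxt ξ ζ i 1 = ξ i 1 :=
  juxt_cast ξ ζ i 1
lemma juxt2 (ξ : Matrix (Fin 3) (Fin 2) ℝ) (ζ : Fin 3 → ℝ) (i : Fin 3) : juxt ξ ζ i 2 = ζ i :=
  juxt_last ξ ζ i

/-- dot product on `Fin 3 → ℝ`. -/
def dotp (a b : Fin 3 → ℝ) : ℝ := ∑ i, a i * b i

lemma dotp_smul (c : ℝ) (a b : Fin 3 → ℝ) : dotp (c • a) b = c * dotp a b := by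
  simp [dotp, Finset.mul_sum, mul_assoc]

lemma dotp_add (a a' b : Fin 3 → ℝ) : dotp (a + a') b = dotp a b + dotp a' b := by
  simp [dotp, add_mul, Finset.sum_add_distrib]

lemma dotp_sum {ι : Type*} (s : Finset ι) (g : ι → Fin 3 → ℝ) (b : Fin 3 → ℝ) :
    dotp (∑ i ∈ s, g i) b = ∑ i ∈ s, dotp (g i) b := by
  simp only [dotp, Finset.sum_apply, Finset.sum_mul]
  rw [Finset.sum_comm]

lemma dotp_self_pos {a : Fin 3 → ℝ} (ha : a ≠ 0) : 0 < dotp a a := by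
  rcases Function.ne_iff.1 ha with ⟨i, hi⟩
  have h1 : (0:ℝ) < a i * a i := mul_self_pos.2 hi
  exact lt_of_lt_of_le h1
    (Finset.single_le_sum (fun k _ => mul_self_nonneg (a k)) (Finset.mem_univ i))

lemma dotp_cont {α : Type*} [TopologicalSpace α] {f g : α → Fin 3 → ℝ}
    (hf : Continuous f) (hg : Continuous g) : Continuous fun x => dotp (f x) (g x) := by
  unfold dotp
  apply continuous_finset_sum
  intro i _
  exact ((continuous_apply i).comp hf).mul ((continuous_apply i).comp hg)

lemma cross0 (a b : Fin 3 → ℝ) : crossProduct a b 0 = a 1 * b 2 - a 2 * b 1 := rfl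
lemma cross1 (a b : Fin 3 → ℝ) : crossProduct a b 1 = a 2 * b 0 - a 0 * b 2 := rfl
lemma cross2 (a b : Fin 3 → ℝ) : crossProduct a b 2 = a 0 * b 1 - a 1 * b 0 := rfl

lemma det_juxt (ξ : Matrix (Fin 3) (Fin 2) ℝ) (ζ : Fin 3 → ℝ) :
    (juxt ξ ζ).det = dotp ζ (crossProduct (fun i => ξ i 0) (fun i => ξ i 1)) := by
  rw [Matrix.det_fin_three]
  simp only [juxt0, juxt1, juxt2, dotp, Fin.sum_univ_three, cross0, cross1, cross2]
  ring

lemma cross_cont {f g : (Fin 2 → ℝ) → (Fin 3 → ℝ)} (hf : Continuous f) (hg : Continuous g) :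
    Continuous fun x => crossProduct (f x) (g x) := by
  apply continuous_pi
  intro i
  fin_cases i
  · show Continuous fun x => f x 1 * g x 2 - f x 2 * g x 1; fun_prop
  · show Continuous fun x => f x 2 * g x 0 - f x 0 * g x 2; fun_prop
  · show Continuous fun x => f x 0 * g x 1 - f x 1 * g x 0; fun_prop

lemma grad_cont {v} (hv : ContDiff ℝ 1 v) : Continuous (grad v) := by
  have h : Continuous (fun x => fderiv ℝ v x) := hv.continuous_fderiv one_ne_zero
  apply continuous_pi; intro i; apply continuous_pi; intro k
  exact (continuous_apply i).comp
    ((ContinuousLinearMap.apply ℝ (Fin 3 → ℝ) (Pi.single k 1)).continuous.comp h)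

lemma juxt_cont {α : Type*} [TopologicalSpace α] {ξ : α → Matrix (Fin 3) (Fin 2) ℝ}
    {ζ : α → Fin 3 → ℝ} (hξ : Continuous ξ) (hζ : Continuous ζ) :
    Continuous fun x => juxt (ξ x) (ζ x) := by
  apply continuous_pi; intro i; apply continuous_pi; intro k
  induction k using Fin.lastCases with
  | last => simp only [juxt_last]; exact (continuous_apply i).comp hζ
  | cast jj => simp only [juxt_cast]; exact (continuous_apply jj).comp ((continuous_apply i).comp hξ)

lemma juxt_contOn {α : Type*} [TopologicalSpace α] {s : Set α} {ξ : α → Matrix (Fin 3) (Fin 2) ℝ}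
    {ζ : α → Fin 3 → ℝ} (hξ : ContinuousOn ξ s) (hζ : ContinuousOn ζ s) :
    ContinuousOn (fun x => juxt (ξ x) (ζ x)) s := by
  have h2 : Continuous fun pq : Matrix (Fin 3) (Fin 2) ℝ × (Fin 3 → ℝ) => juxt pq.1 pq.2 :=
    juxt_cont continuous_fst continuous_snd
  exact h2.comp_continuousOn (hξ.prodMk hζ)

lemma juxt_norm_le (ξ : Matrix (Fin 3) (Fin 2) ℝ) (ζ : Fin 3 → ℝ) :
    ‖juxt ξ ζ‖ ≤ max ‖ξ‖ ‖ζ‖ := by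
  rw [Matrix.norm_le_iff (le_max_iff.2 (Or.inl (norm_nonneg _)))]
  intro i k
  induction k using Fin.lastCases with
  | last =>
    rw [juxt_last]
    exact le_trans (norm_le_pi_norm ζ i) (le_max_right _ _)
  | cast jj =>
    rw [juxt_cast]
    exact le_trans (le_trans (norm_le_pi_norm _ jj) (norm_le_pi_norm ξ i)) (le_max_left _ _)

/-- weight function: distance to `s` if `s` is nonempty, else `1`. -/
def wgt (s : Set (Fin 2 → ℝ)) (x : Fin 2 → ℝ) : ℝ :=
  letI := Classical.propDecidable s.Nonempty
  if s.Nonempty then Metric.infDist x s else 1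

lemma wgt_nonneg (s : Set (Fin 2 → ℝ)) (x) : 0 ≤ wgt s x := by
  unfold wgt; letI := Classical.propDecidable s.Nonempty; split
  · exact Metric.infDist_nonneg
  · norm_num

lemma wgt_cont (s : Set (Fin 2 → ℝ)) : Continuous (wgt s) := by
  unfold wgt; letI := Classical.propDecidable s.Nonempty; split
  · exact Metric.continuous_infDist_pt s
  · exact continuous_const

lemma wgt_eq_zero_of_mem {s : Set (Fin 2 → ℝ)} {x} (h : x ∈ s) : wgt s x = 0 := by
  unfold wgt
  letI := Classical.propDecidable s.Nonempty
  rw [if_pos ⟨x, h⟩]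
  exact Metric.infDist_zero_of_mem h

lemma wgt_pos_of_not_mem {s : Set (Fin 2 → ℝ)} (hs : IsClosed s) {x} (h : x ∉ s) : 0 < wgt s x := by
  unfold wgt; letI := Classical.propDecidable s.Nonempty; split
  · rename_i hne
    exact (hs.notMem_iff_infDist_pos hne).1 h
  · norm_num

end Lem32aux


/-- Lemma 3.2: under (Icv), for `v ∈ C¹_*(Σ̄;ℝ³)` and `j ≥ 1`,
`inf_{φ ∈ C(Σ̄;Λ_v^j)} ∫_Σ W(∇v(x)|φ(x)) dx = ∫_Σ inf_{ζ ∈ Λ_v^j(x)} W(∇v(x)|ζ) dx`. -/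
theorem inf_selection_lintegral_eq
    (p C : ℝ) (hp : 1 < p) (hC : 0 < C)
    (S : Set (Fin 2 → ℝ)) (hSopen : IsOpen S) (hSbdd : Bornology.IsBounded S)
    (W : Matrix (Fin 3) (Fin 3) ℝ → ℝ≥0∞)
    (hWcont : Continuous W)
    (hWcoer : ∀ F : Matrix (Fin 3) (Fin 3) ℝ, ENNReal.ofReal (C * ‖F‖ ^ p) ≤ W F)
    (hIcv : ∀ δ : ℝ, 0 < δ → ∃ c : ℝ, 0 < c ∧ ∀ F : Matrix (Fin 3) (Fin 3) ℝ,
      δ ≤ F.det → W F ≤ ENNReal.ofReal (c * (1 + ‖F‖ ^ p)))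
    (v : (Fin 2 → ℝ) → (Fin 3 → ℝ)) (hv : C1star S v)
    (j : ℕ) (hj : 1 ≤ j) :
    (⨅ φ : {φ : (Fin 2 → ℝ) → (Fin 3 → ℝ) //
        ContinuousOn φ (closure S) ∧ ∀ x ∈ closure S, φ x ∈ Lam v j x},
      ∫⁻ x in S, W (juxt (grad v x) (φ.1 x))) =
    ∫⁻ x in S, ⨅ ζ ∈ Lam v j x, W (juxt (grad v x) ζ) := by
  classical
  borelize (Matrix (Fin 3) (Fin 3) ℝ)
  borelize (Matrix (Fin 3) (Fin 2) ℝ)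
  obtain ⟨hv1, hv2⟩ := hv
  have hSmeas : MeasurableSet S := hSopen.measurableSet
  have hμS : volume S ≠ ⊤ := hSbdd.measure_lt_top.ne
  have hKcomp : IsCompact (closure S) :=
    Metric.isCompact_of_isClosed_isBounded isClosed_closure hSbdd.closure
  have hgradc : Continuous (grad v) := Lem32aux.grad_cont hv1
  set n : (Fin 2 → ℝ) → (Fin 3 → ℝ) :=
    fun x => crossProduct (fun i => grad v x i 0) (fun i => grad v x i 1) with hn
  have hncont : Continuous n := by
    apply Lem32aux.cross_cont
    · exact continuous_pi fun i =>
        (continuous_apply (0 : Fin 2)).comp ((continuous_apply i).comp hgradc)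
    · exact continuous_pi fun i =>
        (continuous_apply (1 : Fin 2)).comp ((continuous_apply i).comp hgradc)
  have hdet : ∀ x (ζ : Fin 3 → ℝ), (juxt (grad v x) ζ).det = Lem32aux.dotp ζ (n x) :=
    fun x ζ => Lem32aux.det_juxt _ _
  have hmem_iff : ∀ x (ζ : Fin 3 → ℝ), ζ ∈ Lam v j x ↔ (1:ℝ)/j ≤ Lem32aux.dotp ζ (n x) := by
    intro x ζ
    rw [Lam, Set.mem_setOf_eq, hdet]
  have hQpos : ∀ x ∈ closure S, 0 < Lem32aux.dotp (n x) (n x) :=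
    fun x hx => Lem32aux.dotp_self_pos (hv2 x hx)
  have hj0 : (0:ℝ) < 1/j := by
    apply div_pos one_pos
    exact_mod_cast Nat.lt_of_lt_of_le Nat.zero_lt_one hj
  have hp0 : (0:ℝ) ≤ p := le_of_lt (lt_trans one_pos hp)
  set φ₀ : (Fin 2 → ℝ) → (Fin 3 → ℝ) :=
    fun x => (1 / (j * Lem32aux.dotp (n x) (n x))) • n x with hφ₀def
  have hφ₀dot : ∀ x ∈ closure S, Lem32aux.dotp (φ₀ x) (n x) = 1/j := by
    intro x hx
    rw [hφ₀def]
    simp only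
    rw [Lem32aux.dotp_smul]
    have h1 := (hQpos x hx).ne'
    have h2 : (j:ℝ) ≠ 0 := by positivity
    field_simp
  have hφ₀mem : ∀ x ∈ closure S, φ₀ x ∈ Lam v j x := by
    intro x hx
    rw [hmem_iff, hφ₀dot x hx]
  have hQcont : Continuous fun x => Lem32aux.dotp (n x) (n x) :=
    Lem32aux.dotp_cont hncont hncont
  have hφ₀cont : ContinuousOn φ₀ (closure S) := by
    apply ContinuousOn.fun_smul _ hncont.continuousOn
    apply ContinuousOn.div continuousOn_const (continuous_const.mul hQcont).continuousOn
    intro x hx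
    have h1 := hQpos x hx
    have h2 : (0:ℝ) < (j:ℝ) := by exact_mod_cast Nat.lt_of_lt_of_le Nat.zero_lt_one hj
    exact (mul_pos h2 h1).ne'
  obtain ⟨c, hc, hWle⟩ := hIcv (1/j) hj0
  obtain ⟨G, hG⟩ : ∃ G, ∀ x ∈ closure S, ‖grad v x‖ ≤ G :=
    hKcomp.exists_bound_of_continuousOn hgradc.continuousOn
  obtain ⟨B₀, hB₀⟩ : ∃ B, ∀ x ∈ closure S, ‖φ₀ x‖ ≤ B :=
    hKcomp.exists_bound_of_continuousOn hφ₀cont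
  set Gb : ℝ := max G 0 with hGbdef
  -- uniform bound on W along admissible vectors of norm ≤ R
  have hWbound : ∀ (R : ℝ) (x : Fin 2 → ℝ) (ζ : Fin 3 → ℝ), x ∈ closure S → ‖ζ‖ ≤ R →
      (1:ℝ)/j ≤ Lem32aux.dotp ζ (n x) →
      W (juxt (grad v x) ζ) ≤ ENNReal.ofReal (c * (1 + max Gb R ^ p)) := by
    intro R x ζ hx hζ hdd
    have hd : (1:ℝ)/j ≤ (juxt (grad v x) ζ).det := by rw [hdet]; exact hdd
    refine le_trans (hWle _ hd) (ENNReal.ofReal_le_ofReal ?_)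
    have hF : ‖juxt (grad v x) ζ‖ ≤ max Gb R := by
      refine le_trans (Lem32aux.juxt_norm_le _ _) (max_le_max ?_ hζ)
      exact le_trans (hG x hx) (le_max_left _ _)
    have h1 : ‖juxt (grad v x) ζ‖ ^ p ≤ max Gb R ^ p :=
      Real.rpow_le_rpow (norm_nonneg _) hF hp0
    have := hc.le
    nlinarith
  -- the dense sequence and the approximating functions
  set q : ℕ → (Fin 3 → ℝ) := TopologicalSpace.denseSeq (Fin 3 → ℝ) with hqdef
  have hq : DenseRange q := TopologicalSpace.denseRange_denseSeq (Fin 3 → ℝ)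
  set gq : ℕ → (Fin 2 → ℝ) → ℝ≥0∞ := fun i x =>
    if (1:ℝ)/j < Lem32aux.dotp (q i) (n x) then W (juxt (grad v x) (q i)) else ⊤ with hgqdef
  set h₀ : (Fin 2 → ℝ) → ℝ≥0∞ := fun x => W (juxt (grad v x) (φ₀ x)) with hh₀def
  set f : ℕ → (Fin 2 → ℝ) → ℝ≥0∞ :=
    fun N x => h₀ x ⊓ ⨅ i : Fin (N+1), gq i.1 x with hfdef
  -- measurability
  have hφ₀meas : Measurable φ₀ := by
    apply Measurable.fun_smul _ hncont.measurable
    exact measurable_const.div (continuous_const.mul hQcont).measurable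
  have hh₀meas : Measurable h₀ := by
    apply hWcont.measurable.comp
    exact ((Lem32aux.juxt_cont continuous_fst continuous_snd).measurable).comp
      (hgradc.measurable.prodMk hφ₀meas)
  have hgqmeas : ∀ i, Measurable (gq i) := by
    intro i
    apply Measurable.ite
    · exact (isOpen_lt continuous_const (Lem32aux.dotp_cont continuous_const hncont)).measurableSet
    · exact hWcont.measurable.comp (Lem32aux.juxt_cont hgradc continuous_const).measurable
    · exact measurable_const
  have hfmeas : ∀ N, Measurable (f N) :=
    fun N => hh₀meas.inf (Measurable.iInf fun i => hgqmeas i.1)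
  have hfanti : Antitone f := by
    intro N M hNM x
    refine inf_le_inf_left _ (le_iInf fun i => ?_)
    exact iInf_le (fun l : Fin (M+1) => gq l.1 x) (Fin.castLE (Nat.succ_le_succ hNM) i)
  -- pointwise identities
  have claimA : ∀ x, (⨅ N, f N x) = h₀ x ⊓ ⨅ i : ℕ, gq i x := by
    intro x
    apply le_antisymm
    · refine le_inf ((iInf_le _ 0).trans inf_le_left) (le_iInf fun i => ?_)
      exact (iInf_le _ i).trans (inf_le_right.trans (iInf_le _ (⟨i, Nat.lt_succ_self i⟩ : Fin (i+1))))
    · refine le_iInf fun N => le_inf inf_le_left (le_iInf fun i => ?_)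
      exact inf_le_right.trans (iInf_le _ i.1)
  have hh₀fin : ∀ x ∈ closure S, h₀ x ≤ ENNReal.ofReal (c * (1 + max Gb B₀ ^ p)) := by
    intro x hx
    exact hWbound B₀ x (φ₀ x) hx (hB₀ x hx) (le_of_eq (hφ₀dot x hx).symm)
  have claimB : ∀ x ∈ closure S,
      (⨅ ζ ∈ Lam v j x, W (juxt (grad v x) ζ)) = h₀ x ⊓ ⨅ i : ℕ, gq i x := by
    intro x hx
    apply le_antisymm
    · refine le_inf (iInf₂_le _ (hφ₀mem x hx)) (le_iInf fun i => ?_)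
      by_cases hi : (1:ℝ)/j < Lem32aux.dotp (q i) (n x)
      · have : gq i x = W (juxt (grad v x) (q i)) := if_pos hi
        rw [this]
        exact iInf₂_le _ ((hmem_iff x (q i)).2 hi.le)
      · have : gq i x = ⊤ := if_neg hi
        rw [this]; exact le_top
    · refine le_iInf₂ fun ζ hζ => ?_
      apply ENNReal.le_of_forall_pos_le_add
      intro ε hε hWζ
      have hVopen : IsOpen {ζ' : Fin 3 → ℝ |
          W (juxt (grad v x) ζ') < W (juxt (grad v x) ζ) + ε} :=
        isOpen_Iio.preimage (hWcont.comp (Lem32aux.juxt_cont continuous_const continuous_id))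
      have hζV : ζ ∈ {ζ' : Fin 3 → ℝ |
          W (juxt (grad v x) ζ') < W (juxt (grad v x) ζ) + ε} :=
        ENNReal.lt_add_right hWζ.ne (by exact_mod_cast hε.ne')
      have hcont : Continuous fun t : ℝ => ζ + t • n x := by fun_prop
      have ht0 : Tendsto (fun t : ℝ => ζ + t • n x) (nhds 0) (nhds ζ) := by
        have := hcont.tendsto 0
        simpa using this
      have hev : ∀ᶠ t in nhds (0:ℝ), (ζ + t • n x) ∈ {ζ' : Fin 3 → ℝ |
          W (juxt (grad v x) ζ') < W (juxt (grad v x) ζ) + ε} :=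
        ht0.eventually (hVopen.eventually_mem hζV)
      have hev2 : ∀ᶠ t in nhdsWithin (0:ℝ) (Set.Ioi 0), (ζ + t • n x) ∈ {ζ' : Fin 3 → ℝ |
          W (juxt (grad v x) ζ') < W (juxt (grad v x) ζ) + ε} :=
        hev.filter_mono nhdsWithin_le_nhds
      obtain ⟨t, htV, ht⟩ := (hev2.and (eventually_mem_nhdsWithin)).exists
      have htO : (1:ℝ)/j < Lem32aux.dotp (ζ + t • n x) (n x) := by
        rw [Lem32aux.dotp_add, Lem32aux.dotp_smul]
        have h1 := hQpos x hx
        have h2 := (hmem_iff x ζ).1 hζ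
        have h3 : (0:ℝ) < t := ht
        nlinarith
      have hopen2 : IsOpen ({ζ' : Fin 3 → ℝ |
          W (juxt (grad v x) ζ') < W (juxt (grad v x) ζ) + ε} ∩
          {ζ' : Fin 3 → ℝ | (1:ℝ)/j < Lem32aux.dotp ζ' (n x)}) :=
        hVopen.inter (isOpen_lt continuous_const
          (Lem32aux.dotp_cont continuous_id continuous_const))
      obtain ⟨i, hqi⟩ := hq.exists_mem_open hopen2 ⟨_, htV, htO⟩
      calc h₀ x ⊓ ⨅ i : ℕ, gq i x ≤ gq i x := inf_le_right.trans (iInf_le _ i)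
        _ = W (juxt (grad v x) (q i)) := if_pos hqi.2
        _ ≤ W (juxt (grad v x) ζ) + ε := hqi.1.le
  -- integral of the infimum
  set M₀ : ℝ≥0∞ := ENNReal.ofReal (c * (1 + max Gb B₀ ^ p)) with hM₀def
  have hf0fin : ∫⁻ x in S, f 0 x ∂volume ≠ ⊤ := by
    have hle : ∫⁻ x in S, f 0 x ∂volume ≤ M₀ * volume S := by
      have h1 : ∫⁻ x in S, f 0 x ∂volume ≤ ∫⁻ _ in S, M₀ ∂volume := by
        apply lintegral_mono_ae
        rw [ae_restrict_iff' hSmeas]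
        apply ae_of_all
        intro x hx
        exact inf_le_left.trans (hh₀fin x (subset_closure hx))
      rw [lintegral_const, Measure.restrict_apply_univ] at h1
      exact h1
    exact (lt_of_le_of_lt hle (ENNReal.mul_lt_top ENNReal.ofReal_lt_top hμS.lt_top)).ne
  have hIm : (∫⁻ x in S, ⨅ ζ ∈ Lam v j x, W (juxt (grad v x) ζ) ∂volume) =
      ⨅ N, ∫⁻ x in S, f N x ∂volume := by
    have hcongr : (∫⁻ x in S, ⨅ ζ ∈ Lam v j x, W (juxt (grad v x) ζ) ∂volume) =
        ∫⁻ x in S, ⨅ N, f N x ∂volume := by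
      apply lintegral_congr_ae
      rw [Filter.EventuallyEq, ae_restrict_iff' hSmeas]
      apply ae_of_all
      intro x hx
      rw [claimB x (subset_closure hx), ← claimA x]
    rw [hcongr, lintegral_iInf hfmeas hfanti hf0fin]
  -- conclusion
  apply le_antisymm
  · -- hard direction
    apply ENNReal.le_of_forall_pos_le_add
    intro ε hε hfin
    have hε2 : ((ε : ℝ≥0∞)/2) ≠ 0 := by
      simp only [ne_eq, ENNReal.div_eq_zero_iff]
      push_neg
      constructor
      · exact_mod_cast hε.ne'
      · exact ENNReal.ofNat_ne_top
    have hlt : (⨅ N, ∫⁻ x in S, f N x ∂volume) <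
        (∫⁻ x in S, ⨅ ζ ∈ Lam v j x, W (juxt (grad v x) ζ) ∂volume) + (ε : ℝ≥0∞)/2 := by
      rw [← hIm]
      exact ENNReal.lt_add_right hfin.ne hε2
    obtain ⟨N, hN⟩ := iInf_lt_iff.1 hlt
    -- the construction of a near-optimal continuous selection
    set O : Fin (N+1) → Set (Fin 2 → ℝ) :=
      fun i => {x | (1:ℝ)/j < Lem32aux.dotp (q i.1) (n x)} with hOdef
    have hOopen : ∀ i, IsOpen (O i) :=
      fun i => isOpen_lt continuous_const (Lem32aux.dotp_cont continuous_const hncont)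
    set E : Fin (N+1) → Set (Fin 2 → ℝ) := fun i => {x | gq i.1 x = f N x} with hEdef
    have hEmeas : ∀ i, MeasurableSet (E i) := by
      intro i
      have h1 : MeasurableSet {x | gq i.1 x ≤ f N x} := measurableSet_le (hgqmeas i.1) (hfmeas N)
      have h2 : MeasurableSet {x | f N x ≤ gq i.1 x} := measurableSet_le (hfmeas N) (hgqmeas i.1)
      have heq : E i = {x | gq i.1 x ≤ f N x} ∩ {x | f N x ≤ gq i.1 x} := by
        ext x
        simp only [hEdef, Set.mem_setOf_eq, Set.mem_inter_iff, le_antisymm_iff]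
      rw [heq]
      exact h1.inter h2
    set A : Fin (N+1) → Set (Fin 2 → ℝ) :=
      fun i => (S ∩ O i ∩ E i) ∩ ⋂ l : Fin (N+1), ⋂ (_ : l < i), (O l ∩ E l)ᶜ with hAdef
    have hAmeas : ∀ i, MeasurableSet (A i) := by
      intro i
      refine ((hSmeas.inter (hOopen i).measurableSet).inter (hEmeas i)).inter ?_
      exact MeasurableSet.iInter fun l => MeasurableSet.iInter fun _ =>
        ((hOopen l).measurableSet.inter (hEmeas l)).compl
    set Ab : Set (Fin 2 → ℝ) := S \ ⋃ i, A i with hAbdef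
    have hAbmeas : MeasurableSet Ab := hSmeas.diff (MeasurableSet.iUnion hAmeas)
    have hAsubS : ∀ i, A i ⊆ S := fun i x hx => hx.1.1.1
    have hAbsubS : Ab ⊆ S := Set.diff_subset
    have hAdisj : ∀ i l : Fin (N+1), i ≠ l → ∀ x, x ∈ A i → x ∉ A l := by
      intro i l hil x hxi hxl
      rcases lt_or_gt_of_ne hil with h | h
      · have := Set.mem_iInter.1 (Set.mem_iInter.1 hxl.2 i) h
        exact this ⟨hxi.1.1.2, hxi.1.2⟩
      · have := Set.mem_iInter.1 (Set.mem_iInter.1 hxi.2 l) h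
        exact this ⟨hxl.1.1.2, hxl.1.2⟩
    have hAbdisj : ∀ i, ∀ x ∈ Ab, x ∉ A i :=
      fun i x hx hxi => hx.2 (Set.mem_iUnion.2 ⟨i, hxi⟩)
    have hAbeq : ∀ x ∈ Ab, f N x = h₀ x := by
      intro x hx
      obtain ⟨i₀, -, hi₀⟩ := Finset.exists_min_image Finset.univ
        (fun i : Fin (N+1) => gq i.1 x) ⟨0, Finset.mem_univ 0⟩
      have hinf_eq : (⨅ i : Fin (N+1), gq i.1 x) = gq i₀.1 x :=
        le_antisymm (iInf_le _ i₀) (le_iInf fun l => hi₀ l (Finset.mem_univ l))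
      by_cases hcase : h₀ x ≤ gq i₀.1 x
      · show h₀ x ⊓ (⨅ i : Fin (N+1), gq i.1 x) = h₀ x
        rw [hinf_eq]
        exact inf_eq_left.2 hcase
      · exfalso
        push_neg at hcase
        have hxO : x ∈ O i₀ := by
          by_contra hxO
          have hgt : gq i₀.1 x = ⊤ := if_neg hxO
          rw [hgt] at hcase
          exact absurd hcase (not_lt.2 le_top)
        have hfNx : f N x = gq i₀.1 x := by
          show h₀ x ⊓ (⨅ i : Fin (N+1), gq i.1 x) = gq i₀.1 x
          rw [hinf_eq]
          exact inf_eq_right.2 hcase.le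
        obtain ⟨lm, hlmP, hlmmin⟩ := Finset.exists_min_image
          (Finset.univ.filter (fun l : Fin (N+1) => x ∈ O l ∧ gq l.1 x = f N x)) id
          ⟨i₀, Finset.mem_filter.2 ⟨Finset.mem_univ _, hxO, hfNx.symm⟩⟩
        have hlmP' : x ∈ O lm ∧ gq lm.1 x = f N x := (Finset.mem_filter.1 hlmP).2
        have hxA : x ∈ A lm := by
          refine ⟨⟨⟨hx.1, hlmP'.1⟩, hlmP'.2⟩, ?_⟩
          refine Set.mem_iInter.2 fun l => Set.mem_iInter.2 fun hl => ?_
          intro hmem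
          have hlP : l ∈ Finset.univ.filter
              (fun l : Fin (N+1) => x ∈ O l ∧ gq l.1 x = f N x) :=
            Finset.mem_filter.2 ⟨Finset.mem_univ _, hmem.1, hmem.2⟩
          exact absurd (hlmmin l hlP) (not_le.2 hl)
        exact hAbdisj lm x hx hxA
    -- constants
    set R : ℝ := max B₀ 0 + ∑ i : Fin (N+1), ‖q i.1‖ with hRdef
    have hsum0 : (0:ℝ) ≤ ∑ i : Fin (N+1), ‖q i.1‖ :=
      Finset.sum_nonneg fun i _ => norm_nonneg _
    have hRφ₀ : ∀ x ∈ closure S, ‖φ₀ x‖ ≤ R := fun x hx =>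
      le_trans (le_trans (hB₀ x hx) (le_max_left _ _)) (le_add_of_nonneg_right hsum0)
    have hRq : ∀ i : Fin (N+1), ‖q i.1‖ ≤ R := fun i =>
      le_add_of_nonneg_of_le (le_max_right B₀ 0)
        (Finset.single_le_sum (fun l (_ : l ∈ Finset.univ) => norm_nonneg (q l.1))
          (Finset.mem_univ i))
    set M' : ℝ≥0∞ := ENNReal.ofReal (c * (1 + max Gb R ^ p)) with hM'def
    have hM'ne0 : M' ≠ 0 := by
      rw [hM'def]
      simp only [ne_eq, ENNReal.ofReal_eq_zero, not_le]
      have h1 : (0:ℝ) ≤ max Gb R ^ p := Real.rpow_nonneg (le_max_of_le_left (le_max_right G 0)) p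
      nlinarith
    have hM'top : M' ≠ ⊤ := ENNReal.ofReal_ne_top
    set δ : ℝ≥0∞ := ((ε : ℝ≥0∞)/2) / (((N:ℝ≥0∞) + 2) * M') with hδdef
    have hδ0 : δ ≠ 0 := by
      rw [hδdef]
      refine (ENNReal.div_pos hε2 ?_).ne'
      exact ENNReal.mul_ne_top (by simp) hM'top
    -- compact approximations
    have hAfin : ∀ i, volume (A i) ≠ ⊤ :=
      fun i => (lt_of_le_of_lt (measure_mono (hAsubS i)) hμS.lt_top).ne
    have hex := fun i => (hAmeas i).exists_isCompact_diff_lt (hAfin i) hδ0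
    choose KK hKKsub hKKcomp hKKvol using hex
    obtain ⟨Kb, hKbsub, hKbcomp, hKbvol⟩ := hAbmeas.exists_isCompact_diff_lt
      ((lt_of_le_of_lt (measure_mono hAbsubS) hμS.lt_top).ne) hδ0
    -- weights
    set bigK : Set (Fin 2 → ℝ) := ⋃ i, KK i with hbigKdef
    have hbigKclosed : IsClosed bigK :=
      isClosed_iUnion_of_finite fun i => (hKKcomp i).isClosed
    set bad : Fin (N+1) → Set (Fin 2 → ℝ) :=
      fun i => (Kb ∪ ⋃ l : {l : Fin (N+1) // l ≠ i}, KK l.1) ∪ (O i)ᶜ with hbaddef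
    have hbadclosed : ∀ i, IsClosed (bad i) := fun i =>
      ((hKbcomp.isClosed.union
        (isClosed_iUnion_of_finite fun l : {l : Fin (N+1) // l ≠ i} => (hKKcomp l.1).isClosed))).union
        (hOopen i).isClosed_compl
    set w : Fin (N+1) → (Fin 2 → ℝ) → ℝ := fun i x => Lem32aux.wgt (bad i) x with hwdef
    set wb : (Fin 2 → ℝ) → ℝ := fun x => Lem32aux.wgt bigK x with hwbdef
    set T : (Fin 2 → ℝ) → ℝ := fun x => wb x + ∑ i, w i x with hTdef
    have hKKO : ∀ i, ∀ x ∈ KK i, x ∈ O i := fun i x hx => (hKKsub i hx).1.1.2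
    have hKKE : ∀ i, ∀ x ∈ KK i, gq i.1 x = f N x := fun i x hx => (hKKsub i hx).1.2
    have hKKS : ∀ i, ∀ x ∈ KK i, x ∈ S := fun i x hx => (hKKsub i hx).1.1.1
    have hKbKK : ∀ i, ∀ x ∈ Kb, x ∉ KK i :=
      fun i x hxKb hxKK => hAbdisj i x (hKbsub hxKb) (hKKsub i hxKK)
    have hKKKb : ∀ i, ∀ x ∈ KK i, x ∉ Kb := fun i x hxKK hxKb => hKbKK i x hxKb hxKK
    have hKKdisj : ∀ i l, i ≠ l → ∀ x, x ∈ KK i → x ∉ KK l :=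
      fun i l hil x hxi hxl => hAdisj i l hil x (hKKsub i hxi) (hKKsub l hxl)
    have hwnonneg : ∀ i x, 0 ≤ w i x := fun i x => Lem32aux.wgt_nonneg _ x
    have hwbnonneg : ∀ x, 0 ≤ wb x := fun x => Lem32aux.wgt_nonneg _ x
    have hnotbad : ∀ i, ∀ x ∈ KK i, x ∉ bad i := by
      intro i x hx hmem
      rcases hmem with (hmem | hmem)
      · rcases hmem with hmem | hmem
        · exact hKKKb i x hx hmem
        · obtain ⟨l, hl⟩ := Set.mem_iUnion.1 hmem
          exact hKKdisj l.1 i l.2 x hl hx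
      · exact hmem (hKKO i x hx)
    have hwpos : ∀ i, ∀ x ∈ KK i, 0 < w i x :=
      fun i x hx => Lem32aux.wgt_pos_of_not_mem (hbadclosed i) (hnotbad i x hx)
    have hTpos : ∀ x, 0 < T x := by
      intro x
      by_cases hx : x ∈ bigK
      · obtain ⟨i, hi⟩ := Set.mem_iUnion.1 hx
        have h1 := hwpos i x hi
        have h2 : w i x ≤ ∑ l, w l x :=
          Finset.single_le_sum (fun l _ => hwnonneg l x) (Finset.mem_univ i)
        have h3 := hwbnonneg x
        show 0 < wb x + ∑ l, w l x
        linarith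
      · have h1 : 0 < wb x := Lem32aux.wgt_pos_of_not_mem hbigKclosed hx
        have h2 : (0:ℝ) ≤ ∑ l, w l x := Finset.sum_nonneg fun l _ => hwnonneg l x
        show 0 < wb x + ∑ l, w l x
        linarith
    -- the selection
    set φ : (Fin 2 → ℝ) → (Fin 3 → ℝ) :=
      fun x => (T x)⁻¹ • (wb x • φ₀ x + ∑ i, w i x • q i.1) with hφdef2
    have hTcont : Continuous T :=
      (Lem32aux.wgt_cont _).add (continuous_finset_sum _ fun i _ => Lem32aux.wgt_cont _)
    have hφcont : ContinuousOn φ (closure S) := by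
      apply ContinuousOn.fun_smul
      · exact (hTcont.inv₀ fun x => (hTpos x).ne').continuousOn
      · apply ContinuousOn.fun_add
        · exact ((Lem32aux.wgt_cont _).continuousOn).fun_smul hφ₀cont
        · exact (continuous_finset_sum _ fun i _ =>
            (Lem32aux.wgt_cont _).fun_smul continuous_const).continuousOn
    have hwO : ∀ i x, w i x ≠ 0 → x ∈ O i := by
      intro i x hwx
      by_contra hxO
      exact hwx (Lem32aux.wgt_eq_zero_of_mem (Set.mem_union_right _ hxO))
    have hφdot : ∀ x ∈ closure S, (1:ℝ)/j ≤ Lem32aux.dotp (φ x) (n x) := by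
      intro x hx
      have hTx := hTpos x
      have heq : Lem32aux.dotp (φ x) (n x) = (T x)⁻¹ *
          (wb x * Lem32aux.dotp (φ₀ x) (n x) +
            ∑ i, w i x * Lem32aux.dotp (q i.1) (n x)) := by
        show Lem32aux.dotp ((T x)⁻¹ • (wb x • φ₀ x + ∑ i, w i x • q i.1)) (n x) = _
        rw [Lem32aux.dotp_smul, Lem32aux.dotp_add, Lem32aux.dotp_smul, Lem32aux.dotp_sum]
        congr 2
        exact Finset.sum_congr rfl fun i _ => Lem32aux.dotp_smul _ _ _
      rw [heq, hφ₀dot x hx]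
      have hterm : ∀ i : Fin (N+1),
          w i x * (1/j) ≤ w i x * Lem32aux.dotp (q i.1) (n x) := by
        intro i
        by_cases hwx : w i x = 0
        · rw [hwx]; simp
        · have hO : (1:ℝ)/j < Lem32aux.dotp (q i.1) (n x) := hwO i x hwx
          exact mul_le_mul_of_nonneg_left hO.le (hwnonneg i x)
      have hsum : T x * (1/(j:ℝ)) ≤ wb x * (1/j) +
          ∑ i, w i x * Lem32aux.dotp (q i.1) (n x) := by
        have h5 : ∑ i, w i x * (1/(j:ℝ)) ≤
            ∑ i, w i x * Lem32aux.dotp (q i.1) (n x) :=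
          Finset.sum_le_sum fun i _ => hterm i
        have h6 : T x * (1/(j:ℝ)) = wb x * (1/j) + ∑ i, w i x * (1/(j:ℝ)) := by
          show (wb x + ∑ i, w i x) * (1/(j:ℝ)) = _
          rw [add_mul, Finset.sum_mul]
        rw [h6]
        linarith
      calc (1:ℝ)/j = (T x)⁻¹ * (T x * (1/j)) := by field_simp
        _ ≤ _ := mul_le_mul_of_nonneg_left hsum (inv_nonneg.2 hTx.le)
    have hφmem : ∀ x ∈ closure S, φ x ∈ Lam v j x :=
      fun x hx => (hmem_iff x (φ x)).2 (hφdot x hx)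
    have hφnorm : ∀ x ∈ closure S, ‖φ x‖ ≤ R := by
      intro x hx
      have hTx := hTpos x
      have h1 : ‖wb x • φ₀ x + ∑ i, w i x • q i.1‖ ≤ T x * R := by
        refine le_trans (norm_add_le _ _) ?_
        have h2 : ‖wb x • φ₀ x‖ ≤ wb x * R := by
          rw [norm_smul, Real.norm_eq_abs, abs_of_nonneg (hwbnonneg x)]
          exact mul_le_mul_of_nonneg_left (hRφ₀ x hx) (hwbnonneg x)
        have h3 : ‖∑ i, w i x • q i.1‖ ≤ ∑ i, w i x * R := by
          refine le_trans (norm_sum_le _ _) (Finset.sum_le_sum fun i _ => ?_)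
          rw [norm_smul, Real.norm_eq_abs, abs_of_nonneg (hwnonneg i x)]
          exact mul_le_mul_of_nonneg_left (hRq i) (hwnonneg i x)
        have h4 : T x * R = wb x * R + ∑ i, w i x * R := by
          show (wb x + ∑ i, w i x) * R = _
          rw [add_mul, Finset.sum_mul]
        rw [h4]
        linarith
      show ‖(T x)⁻¹ • (wb x • φ₀ x + ∑ i, w i x • q i.1)‖ ≤ R
      rw [norm_smul, Real.norm_eq_abs, abs_of_pos (inv_pos.2 hTx)]
      calc (T x)⁻¹ * ‖wb x • φ₀ x + ∑ i, w i x • q i.1‖ ≤ (T x)⁻¹ * (T x * R) :=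
            mul_le_mul_of_nonneg_left h1 (inv_nonneg.2 hTx.le)
        _ = R := by field_simp
    have hφW : ∀ x ∈ closure S, W (juxt (grad v x) (φ x)) ≤ M' :=
      fun x hx => hWbound R x (φ x) hx (hφnorm x hx) (hφdot x hx)
    -- φ coincides with the chosen options on the compact pieces
    have hφKK : ∀ i, ∀ x ∈ KK i, φ x = q i.1 := by
      intro i x hx
      have hwb0 : wb x = 0 := Lem32aux.wgt_eq_zero_of_mem (Set.mem_iUnion.2 ⟨i, hx⟩)
      have hwl : ∀ l, l ≠ i → w l x = 0 := by
        intro l hl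
        apply Lem32aux.wgt_eq_zero_of_mem
        exact Set.mem_union_left _ (Set.mem_union_right _
          (Set.mem_iUnion.2 ⟨⟨i, fun h => hl h.symm⟩, hx⟩))
      have hsum : ∑ l, w l x • q l.1 = w i x • q i.1 :=
        Finset.sum_eq_single i (fun l _ hl => by rw [hwl l hl, zero_smul])
          (fun h => absurd (Finset.mem_univ i) h)
      have hsum2 : ∑ l, w l x = w i x :=
        Finset.sum_eq_single i (fun l _ hl => hwl l hl)
          (fun h => absurd (Finset.mem_univ i) h)
      have hwipos := hwpos i x hx
      have hT : T x = w i x := by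
        show wb x + ∑ l, w l x = w i x
        rw [hwb0, hsum2, zero_add]
      show (T x)⁻¹ • (wb x • φ₀ x + ∑ l, w l x • q l.1) = q i.1
      rw [hwb0, zero_smul, zero_add, hsum, hT, inv_smul_smul₀ hwipos.ne']
    have hφKb : ∀ x ∈ Kb, φ x = φ₀ x := by
      intro x hx
      have hwl : ∀ l, w l x = 0 := fun l => Lem32aux.wgt_eq_zero_of_mem
        (Set.mem_union_left _ (Set.mem_union_left _ hx))
      have hxnotbigK : x ∉ bigK := by
        intro hmem
        obtain ⟨l, hl⟩ := Set.mem_iUnion.1 hmem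
        exact hKbKK l x hx hl
      have hwbpos : 0 < wb x := Lem32aux.wgt_pos_of_not_mem hbigKclosed hxnotbigK
      have hsum : ∑ l, w l x • q l.1 = 0 :=
        Finset.sum_eq_zero fun l _ => by rw [hwl l, zero_smul]
      have hT : T x = wb x := by
        show wb x + ∑ l, w l x = wb x
        rw [Finset.sum_eq_zero fun l _ => hwl l, add_zero]
      show (T x)⁻¹ • (wb x • φ₀ x + ∑ l, w l x • q l.1) = φ₀ x
      rw [hsum, add_zero, hT, inv_smul_smul₀ hwbpos.ne']
    -- pointwise estimate and integration
    set U : Set (Fin 2 → ℝ) := Kb ∪ bigK with hUdef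
    have hUmeas : MeasurableSet U := (hKbcomp.isClosed.union hbigKclosed).measurableSet
    have hpt : ∀ x ∈ S, W (juxt (grad v x) (φ x)) ≤
        f N x + (S \ U).indicator (fun _ => M') x := by
      intro x hxS
      have hxK : x ∈ closure S := subset_closure hxS
      by_cases hxU : x ∈ U
      · rcases hxU with hxKb | hxbigK
        · rw [hφKb x hxKb]
          have heq : W (juxt (grad v x) (φ₀ x)) = f N x := (hAbeq x (hKbsub hxKb)).symm
          rw [heq]
          exact le_self_add
        · obtain ⟨i, hi⟩ := Set.mem_iUnion.1 hxbigK
          rw [hφKK i x hi]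
          have h1 : W (juxt (grad v x) (q i.1)) = gq i.1 x := (if_pos (hKKO i x hi)).symm
          rw [h1, hKKE i x hi]
          exact le_self_add
      · have h1 : (S \ U).indicator (fun _ => M') x = M' :=
          Set.indicator_of_mem (Set.mem_diff x |>.2 ⟨hxS, hxU⟩) _
        rw [h1]
        exact le_add_left (hφW x hxK)
    have hint : (∫⁻ x in S, W (juxt (grad v x) (φ x))) ≤
        (∫⁻ x in S, f N x) + M' * volume (S \ U) := by
      have h1 : (∫⁻ x in S, W (juxt (grad v x) (φ x))) ≤
          ∫⁻ x in S, (f N x + (S \ U).indicator (fun _ => M') x) := by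
        apply lintegral_mono_ae
        rw [ae_restrict_iff' hSmeas]
        exact ae_of_all _ hpt
      have h2 : (∫⁻ x in S, (f N x + (S \ U).indicator (fun _ => M') x)) =
          (∫⁻ x in S, f N x) + ∫⁻ x in S, (S \ U).indicator (fun _ => M') x :=
        lintegral_add_left (hfmeas N) _
      have h3 : (∫⁻ x in S, (S \ U).indicator (fun _ => M') x) = M' * volume (S \ U) := by
        rw [lintegral_indicator (hSmeas.diff hUmeas), lintegral_const,
          Measure.restrict_restrict (hSmeas.diff hUmeas), Measure.restrict_apply_univ,
          Set.inter_eq_self_of_subset_left Set.diff_subset]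
      rw [h2, h3] at h1
      exact h1
    have hvolU : volume (S \ U) ≤ ((N:ℝ≥0∞) + 2) * δ := by
      have hsub : S \ U ⊆ (Ab \ Kb) ∪ ⋃ i, (A i \ KK i) := by
        intro x hx
        obtain ⟨hxS, hxU⟩ := hx
        by_cases hxA : x ∈ ⋃ i, A i
        · obtain ⟨i, hi⟩ := Set.mem_iUnion.1 hxA
          refine Set.mem_union_right _ (Set.mem_iUnion.2 ⟨i, hi, fun h => ?_⟩)
          exact hxU (Set.mem_union_right _ (Set.mem_iUnion.2 ⟨i, h⟩))
        · exact Set.mem_union_left _ ⟨⟨hxS, hxA⟩, fun h => hxU (Set.mem_union_left _ h)⟩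
      calc volume (S \ U) ≤ volume ((Ab \ Kb) ∪ ⋃ i, (A i \ KK i)) := measure_mono hsub
        _ ≤ volume (Ab \ Kb) + volume (⋃ i, (A i \ KK i)) := measure_union_le _ _
        _ ≤ δ + ∑ i, volume (A i \ KK i) :=
            add_le_add hKbvol.le (measure_iUnion_fintype_le _ _)
        _ ≤ δ + ∑ _i : Fin (N+1), δ :=
            add_le_add_right (Finset.sum_le_sum fun i _ => (hKKvol i).le) _
        _ = δ + (N+1 : ℕ) * δ := by
            rw [Finset.sum_const, Finset.card_univ, Fintype.card_fin, nsmul_eq_mul]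
        _ = ((N:ℝ≥0∞) + 2) * δ := by push_cast; ring
    have hfinal : M' * volume (S \ U) ≤ (ε : ℝ≥0∞)/2 := by
      calc M' * volume (S \ U) ≤ M' * (((N:ℝ≥0∞) + 2) * δ) := mul_le_mul_right hvolU _
        _ = (((N:ℝ≥0∞) + 2) * M') * δ := by ring
        _ ≤ (ε : ℝ≥0∞)/2 := by rw [hδdef]; exact ENNReal.mul_div_le
    refine le_trans (iInf_le _ ⟨φ, hφcont, hφmem⟩) ?_
    calc (∫⁻ x in S, W (juxt (grad v x) (φ x))) ≤
        (∫⁻ x in S, f N x) + M' * volume (S \ U) := hint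
      _ ≤ ((∫⁻ x in S, ⨅ ζ ∈ Lam v j x, W (juxt (grad v x) ζ)) + (ε:ℝ≥0∞)/2) + (ε:ℝ≥0∞)/2 :=
            add_le_add hN.le hfinal
      _ = (∫⁻ x in S, ⨅ ζ ∈ Lam v j x, W (juxt (grad v x) ζ)) + ↑ε := by
            rw [add_assoc, ENNReal.add_halves]
  · refine le_iInf fun φ => lintegral_mono_ae ?_
    rw [ae_restrict_iff' hSmeas]
    apply ae_of_all
    intro x hx
    exact biInf_le _ (φ.2.2 x (subset_closure hx))
end
end

section
/- Assume W_0 satisfies (Icvbis): for every δ > 0 there exists c_δ > 0 such that for all ξ = (ξ₁|ξ₂) ∈ M^{3×2}, if |ξ₁ ∧ ξ₂| ≥ δ then W_0(ξ) ≤ c_δ(1+|ξ|^p). Then the rank one convex envelope RW_0 of W_0 satisfies: (i) there exists c > 0 such that RW_0(ξ) ≤ c(1+|ξ|^p) for all ξ ∈ M^{3×2}; and (ii) RW_0 is continuous. -/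
open scoped ENNReal
open MeasureTheory Filter

noncomputable section

attribute [local instance] Matrix.normedAddCommGroup

/-- A function `f : M^{3×2} → [0,+∞]` is rank one convex. -/
def RankOneConvex (f : Matrix (Fin 3) (Fin 2) ℝ → ℝ≥0∞) : Prop :=
  ∀ α : ℝ, α ∈ Set.Ioo (0 : ℝ) 1 → ∀ ξ ξ' : Matrix (Fin 3) (Fin 2) ℝ, (ξ - ξ').rank = 1 →
    f (α • ξ + (1 - α) • ξ') ≤ ENNReal.ofReal α * f ξ + ENNReal.ofReal (1 - α) * f ξ'

/-- The rank one convex envelope `Rf` of `f`: the pointwise supremum of all rank one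
convex functions `g ≤ f`. -/
def REnv (f : Matrix (Fin 3) (Fin 2) ℝ → ℝ≥0∞) (ξ : Matrix (Fin 3) (Fin 2) ℝ) : ℝ≥0∞ :=
  ⨆ g ∈ {g : Matrix (Fin 3) (Fin 2) ℝ → ℝ≥0∞ | RankOneConvex g ∧ ∀ η, g η ≤ f η}, g ξ

/-!
A rank one convex `F` satisfies `F ξ ≤ max (F (ξ + η)) (F (ξ - η))` for every rank-one `η`.
By (Icvbis) with `δ = 1`, `W₀`, hence `RW₀ ≤ W₀`, has `p`-growth on `{|ξ₁ ∧ ξ₂| ≥ 1}`. A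
rank-one shift of one entry of the first column, of size `O(1 + |ξ|)`, moves any `ξ` with
`|ξ₂| ≥ 1` into that set in both directions, and a shift of an entry of the second column moves
any `ξ` into `{|ξ₂| ≥ 1}`; two such steps give the growth bound for `RW₀` everywhere.

For continuity, a finite rank one convex function is convex along every matrix entry, since
the matrix units have rank one. A convex function of one variable bounded by `M` on an interval
is `2M`-Lipschitz away from its ends, so the local bound makes `RW₀` Lipschitz in each entry
near every point, and changing the entries one at a time makes it locally Lipschitz.
-/

open Metric
open scoped NNReal

local notation "M32" => Matrix (Fin 3) (Fin 2) ℝ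

namespace Matrix

variable {m n : Type*}

theorem rank_smul_of_ne_zero {K : Type*} [Field K] [Fintype n] {c : K} (hc : c ≠ 0)
    (A : Matrix m n K) : (c • A).rank = A.rank :=
  rank_smul_of_mem_nonZeroDivisors A (mem_nonZeroDivisors_of_ne_zero hc)

theorem rank_single_of_ne_zero {K : Type*} [Field K] [Fintype n] [DecidableEq m]
    [DecidableEq n] (i : m) (j : n) {c : K} (hc : c ≠ 0) : (single i j c).rank = 1 := by
  have hvec : single i j c = vecMulVec (Pi.single i c) (Pi.single j 1) := by
    ext a b
    simp only [single, of_apply, vecMulVec_apply, Pi.single_apply, ite_and, eq_comm]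
    split_ifs <;> simp
  refine le_antisymm (hvec ▸ rank_vecMulVec_le _ _) (Nat.one_le_iff_ne_zero.2 fun h0 => hc ?_)
  have hmem := LinearMap.mem_range_self (single i j c).mulVecLin (Pi.single j 1)
  rw [Submodule.finrank_eq_zero.1 h0, Submodule.mem_bot] at hmem
  simpa [single_mulVec] using congrFun hmem i

theorem sub_single_eq_add_single_neg [DecidableEq m] [DecidableEq n] (A : Matrix m n ℝ)
    (i : m) (j : n) (t : ℝ) : A - single i j t = A + single i j (-t) := by
  ext a b
  simp only [sub_apply, add_apply, single_apply]
  split_ifs <;> ring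

variable [Fintype m] [Fintype n]

theorem norm_col_le (A : Matrix m n ℝ) (j : n) : ‖fun i => A i j‖ ≤ ‖A‖ :=
  norm_transpose A ▸ norm_le_pi_norm A.transpose j

theorem norm_single_le [DecidableEq m] [DecidableEq n] (i : m) (j : n) (t : ℝ) :
    ‖single i j t‖ ≤ |t| := by
  refine (norm_le_iff (abs_nonneg t)).2 fun a b => ?_
  rw [single_apply]
  split_ifs <;> simp

/-- Closed balls of the entrywise sup norm are boxes, so replacing the entries of `ξ` by those
of `η` one at a time never leaves the ball. -/
theorem lipschitzOnWith_closedBall_of_single [DecidableEq m] [DecidableEq n]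
    {f : Matrix m n ℝ → ℝ} {ξ₀ : Matrix m n ℝ} {r : ℝ} {L : ℝ≥0}
    (hf : ∀ Z ∈ closedBall ξ₀ r, ∀ i j t, Z + single i j t ∈ closedBall ξ₀ r →
      |f (Z + single i j t) - f Z| ≤ L * |t|) :
    LipschitzOnWith (Fintype.card (m × n) * L) f (closedBall ξ₀ r) := by
  refine LipschitzOnWith.of_dist_le_mul fun η hη ξ hξ => ?_
  let mix : Finset (m × n) → Matrix m n ℝ := fun s =>
    of fun i j => if (i, j) ∈ s then η i j else ξ i j
  have hmix_mem : ∀ s, mix s ∈ closedBall ξ₀ r := by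
    intro s
    rw [mem_closedBall, dist_eq_norm] at hη hξ ⊢
    refine (norm_le_iff ((norm_nonneg _).trans hξ)).2 fun i j => ?_
    simp only [mix, sub_apply, of_apply]
    split_ifs
    · exact (η - ξ₀).norm_entry_le_entrywise_sup_norm.trans hη
    · exact (ξ - ξ₀).norm_entry_le_entrywise_sup_norm.trans hξ
  have hmix : ∀ s : Finset (m × n), |f (mix s) - f ξ| ≤ s.card * L * dist η ξ := by
    intro s
    induction s using Finset.induction_on with
    | empty =>
      have hempty : mix ∅ = ξ := by ext; simp [mix]
      simp [hempty]
    | insert q s hq ih =>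
      have hins : mix (insert q s) = mix s + single q.1 q.2 (η q.1 q.2 - ξ q.1 q.2) := by
        ext i j
        simp only [mix, Finset.mem_insert, add_apply, of_apply, single_apply]
        rcases eq_or_ne (i, j) q with rfl | hne
        · simp [hq]
        · have hne' : ¬(q.1 = i ∧ q.2 = j) := fun h => hne (Prod.ext h.1.symm h.2.symm)
          simp [hne, hne']
      have hq' := hf _ (hmix_mem s) q.1 q.2 _ (hins ▸ hmix_mem _)
      have hd : |η q.1 q.2 - ξ q.1 q.2| ≤ dist η ξ := by
        rw [dist_eq_norm]
        exact (η - ξ).norm_entry_le_entrywise_sup_norm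
      rw [Finset.card_insert_of_notMem hq, hins]
      push_cast
      calc |f (mix s + single q.1 q.2 (η q.1 q.2 - ξ q.1 q.2)) - f ξ|
          ≤ |f (mix s + single q.1 q.2 (η q.1 q.2 - ξ q.1 q.2)) - f (mix s)|
            + |f (mix s) - f ξ| := abs_sub_le _ _ _
        _ ≤ L * dist η ξ + s.card * L * dist η ξ :=
            add_le_add (hq'.trans (mul_le_mul_of_nonneg_left hd L.2)) ih
        _ = (s.card + 1) * L * dist η ξ := by ring
  have huniv : mix Finset.univ = η := by ext; simp [mix]
  simpa [huniv, Real.dist_eq, Finset.card_univ] using hmix Finset.univ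

end Matrix

theorem one_add_rpow_le_mul {p r x K : ℝ} (hp : 0 ≤ p) (hr : 0 ≤ r) (hx : 0 ≤ x) (hK : 0 ≤ K)
    (h : x ≤ K * max 1 r) : 1 + x ^ p ≤ (1 + K ^ p) * (1 + r ^ p) := by
  have hmax : max 1 r ^ p ≤ 1 + r ^ p := by
    rcases le_total r 1 with h1 | h1
    · rw [max_eq_left h1, Real.one_rpow]; linarith [Real.rpow_nonneg hr p]
    · rw [max_eq_right h1]; linarith
  have hxp : x ^ p ≤ K ^ p * (1 + r ^ p) :=
    calc x ^ p ≤ (K * max 1 r) ^ p := Real.rpow_le_rpow hx h hp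
      _ = K ^ p * max 1 r ^ p := Real.mul_rpow hK (by positivity)
      _ ≤ K ^ p * (1 + r ^ p) := by gcongr
  nlinarith [Real.rpow_nonneg hr p]

theorem ConvexOn.abs_sub_le_mul_abs {g : ℝ → ℝ} {r M t : ℝ} (hg : ConvexOn ℝ Set.univ g)
    (hM : ∀ s, |s| < r → |g s| ≤ M) (ht : |t| < r - 1) : |g t - g 0| ≤ 2 * M * |t| := by
  have hlip := (hg.subset (Set.subset_univ _) (convex_ball 0 r)).lipschitzOnWith_of_abs_le
    one_pos fun a ha => hM a (by simpa using ha)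
  have hM0 : 0 ≤ M := (abs_nonneg _).trans (hM 0 (by rw [abs_zero]; linarith [abs_nonneg t]))
  have := hlip.dist_le_mul t (by simpa using ht) 0 (by simp; linarith [abs_nonneg t])
  simpa [Real.dist_eq, Real.coe_toNNReal _ (by positivity : 0 ≤ 2 * M)] using this

theorem exists_norm_le_norm_cross_single (v : Fin 3 → ℝ) :
    ∃ m : Fin 3, ‖v‖ ≤ ‖crossProduct (Pi.single m 1) v‖ := by
  -- the `(i + 2)`-th entry of `eᵢ₊₁ × v` is `-v i`, so otherwise every `|v i|` is `< ‖v‖`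
  by_contra! h
  have hv : 0 < ‖v‖ := (norm_nonneg _).trans_lt (h 0)
  refine lt_irrefl ‖v‖ ((pi_norm_lt_iff hv).2 fun i => lt_of_le_of_lt ?_ (h (i + 1)))
  have := norm_le_pi_norm (crossProduct (Pi.single (i + 1) 1) v) (i + 2)
  fin_cases i <;> simpa [cross_apply, Pi.single_apply] using this

theorem norm_cross_le (u v : Fin 3 → ℝ) : ‖crossProduct u v‖ ≤ 2 * ‖u‖ * ‖v‖ := by
  have hu := norm_le_pi_norm u
  have hv := norm_le_pi_norm v
  have key : ∀ a b c d, |u a * v b - u c * v d| ≤ 2 * ‖u‖ * ‖v‖ := fun a b c d => by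
    have := abs_sub (u a * v b) (u c * v d)
    rw [abs_mul, abs_mul] at this
    have := mul_le_mul (hu a) (hv b) (abs_nonneg _) (norm_nonneg _)
    have := mul_le_mul (hu c) (hv d) (abs_nonneg _) (norm_nonneg _)
    simp only [Real.norm_eq_abs] at *
    linarith
  refine (pi_norm_le_iff_of_nonneg (by positivity)).2 fun i => ?_
  fin_cases i <;> exact key _ _ _ _

theorem rankOneConvex_REnv (f : M32 → ℝ≥0∞) : RankOneConvex (REnv f) := by
  intro α hα ξ ξ' hr
  refine iSup₂_le fun g hg => (hg.1 α hα ξ ξ' hr).trans ?_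
  gcongr
  · exact le_iSup₂ (f := fun g _ => g ξ) g hg
  · exact le_iSup₂ (f := fun g _ => g ξ') g hg

theorem REnv_le (f : M32 → ℝ≥0∞) (ξ : M32) : REnv f ξ ≤ f ξ :=
  iSup₂_le fun _ hg => hg.2 ξ

namespace RankOneConvex

variable {F : M32 → ℝ≥0∞}

theorem le_of_add_of_sub (hF : RankOneConvex F) {ξ η : M32} (hη : η.rank = 1) {a : ℝ≥0∞}
    (hadd : F (ξ + η) ≤ a) (hsub : F (ξ - η) ≤ a) : F ξ ≤ a := by
  have hrank : (ξ + η - (ξ - η)).rank = 1 := by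
    rw [show ξ + η - (ξ - η) = (2 : ℝ) • η by module, Matrix.rank_smul_of_ne_zero two_ne_zero, hη]
  have h := hF (1 / 2) (by norm_num) (ξ + η) (ξ - η) hrank
  rw [show (1 / 2 : ℝ) • (ξ + η) + (1 - 1 / 2 : ℝ) • (ξ - η) = ξ by module] at h
  calc F ξ ≤ ENNReal.ofReal (1 / 2) * F (ξ + η) + ENNReal.ofReal (1 - 1 / 2) * F (ξ - η) := h
    _ ≤ ENNReal.ofReal (1 / 2) * a + ENNReal.ofReal (1 - 1 / 2) * a := by gcongr
    _ = a := by
        rw [← add_mul, ← ENNReal.ofReal_add (by norm_num) (by norm_num)]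
        norm_num

theorem convexOn_toReal_line (hF : RankOneConvex F) (hfin : ∀ ξ, F ξ ≠ ⊤) (B : M32) {η : M32}
    (hη : η.rank = 1) : ConvexOn ℝ Set.univ fun t : ℝ => (F (B + t • η)).toReal := by
  refine convexOn_iff_pairwise_pos.2 ⟨convex_univ, fun s _ t _ hst a b ha hb hab => ?_⟩
  have hrank : (B + s • η - (B + t • η)).rank = 1 := by
    rw [show B + s • η - (B + t • η) = (s - t) • η by module,
      Matrix.rank_smul_of_ne_zero (sub_ne_zero.2 hst), hη]
  obtain rfl : b = 1 - a := eq_sub_of_add_eq' hab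
  have hcomb : B + (a * s + (1 - a) * t) • η = a • (B + s • η) + (1 - a) • (B + t • η) := by
    module
  have h := hF a ⟨ha, by linarith⟩ _ _ hrank
  have hfin' : ∀ (c : ℝ) ζ, ENNReal.ofReal c * F ζ ≠ ⊤ := fun c ζ =>
    ENNReal.mul_ne_top ENNReal.ofReal_ne_top (hfin ζ)
  simp only [smul_eq_mul, hcomb]
  refine (ENNReal.toReal_mono (ENNReal.add_ne_top.2 ⟨hfin' _ _, hfin' _ _⟩) h).trans_eq ?_
  rw [ENNReal.toReal_add (hfin' _ _) (hfin' _ _), ENNReal.toReal_mul, ENNReal.toReal_mul,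
    ENNReal.toReal_ofReal ha.le, ENNReal.toReal_ofReal hb.le]

theorem le_growth_of_shift (hF : RankOneConvex F) {S T : Set M32} {c k p : ℝ} (hc : 0 ≤ c)
    (hk : 0 ≤ k) (hp : 0 ≤ p) (hS : ∀ ζ ∈ S, F ζ ≤ ENNReal.ofReal (c * (1 + ‖ζ‖ ^ p)))
    (hshift : ∀ ξ ∈ T, ∃ η : M32, η.rank = 1 ∧ ‖η‖ ≤ k * max 1 ‖ξ‖ ∧ ξ + η ∈ S ∧ ξ - η ∈ S) :
    ∀ ξ ∈ T, F ξ ≤ ENNReal.ofReal (c * (1 + (1 + k) ^ p) * (1 + ‖ξ‖ ^ p)) := by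
  intro ξ hξ
  obtain ⟨η, hη, hηn, hadd, hsub⟩ := hshift ξ hξ
  have hbound : ∀ ζ ∈ S, ‖ζ‖ ≤ ‖ξ‖ + ‖η‖ →
      F ζ ≤ ENNReal.ofReal (c * (1 + (1 + k) ^ p) * (1 + ‖ξ‖ ^ p)) := by
    intro ζ hζ hζn
    refine (hS ζ hζ).trans (ENNReal.ofReal_le_ofReal ?_)
    rw [mul_assoc]
    refine mul_le_mul_of_nonneg_left (one_add_rpow_le_mul hp (norm_nonneg _) (norm_nonneg _)
      (by positivity) ?_) hc
    nlinarith [le_max_left 1 ‖ξ‖, le_max_right 1 ‖ξ‖]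
  exact hF.le_of_add_of_sub hη (hbound _ hadd (norm_add_le _ _)) (hbound _ hsub (norm_sub_le _ _))

theorem continuous_of_bounded (hF : RankOneConvex F)
    (hbdd : ∀ R, ∃ M : ℝ≥0, ∀ ξ : M32, ‖ξ‖ ≤ R → F ξ ≤ M) : Continuous F := by
  have hfin : ∀ ξ, F ξ ≠ ⊤ := fun ξ =>
    let ⟨_, hM⟩ := hbdd ‖ξ‖
    ne_top_of_le_ne_top ENNReal.coe_ne_top (hM ξ le_rfl)
  have hlip : LocallyLipschitz fun ξ => (F ξ).toReal := by
    intro ξ₀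
    obtain ⟨M, hM⟩ := hbdd (‖ξ₀‖ + 5)
    refine ⟨_, closedBall ξ₀ 1, closedBall_mem_nhds ξ₀ one_pos,
      Matrix.lipschitzOnWith_closedBall_of_single (L := 2 * M) fun Z hZ i j t hZt => ?_⟩
    have hline := hF.convexOn_toReal_line hfin Z (Matrix.rank_single_of_ne_zero i j one_ne_zero)
    have ht : |t| < 4 - 1 := by
      have := (Matrix.single i j t).norm_entry_le_entrywise_sup_norm (i := i) (j := j)
      rw [Matrix.single_apply_same, Real.norm_eq_abs] at this
      have := dist_triangle_right (Z + Matrix.single i j t) Z ξ₀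
      rw [dist_eq_norm, add_sub_cancel_left] at this
      linarith [mem_closedBall.1 hZ, mem_closedBall.1 hZt]
    have hbound : ∀ s : ℝ, |s| < 4 → |(F (Z + s • Matrix.single i j 1)).toReal| ≤ M := by
      intro s hs
      rw [abs_of_nonneg ENNReal.toReal_nonneg]
      refine ENNReal.toReal_le_coe_of_le_coe (hM _ ?_)
      have hE : ‖s • Matrix.single i j (1 : ℝ)‖ ≤ |s| := by
        simpa [Matrix.smul_single] using Matrix.norm_single_le i j s
      linarith [norm_add_le Z (s • Matrix.single i j 1), norm_le_of_mem_closedBall hZ]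
    simpa [Matrix.smul_single] using hline.abs_sub_le_mul_abs hbound ht
  have hF_eq : F = fun ξ => ENNReal.ofReal (F ξ).toReal :=
    funext fun ξ => (ENNReal.ofReal_toReal (hfin ξ)).symm
  rw [hF_eq]
  exact ENNReal.continuous_ofReal.comp hlip.continuous

end RankOneConvex

theorem exists_rankOne_shift_one_le_norm_cross (ξ : M32) (hξ : 1 ≤ ‖fun i => ξ i 1‖) :
    ∃ η : M32, η.rank = 1 ∧ ‖η‖ ≤ 3 * max 1 ‖ξ‖ ∧
      1 ≤ ‖crossProduct (fun i => (ξ + η) i 0) (fun i => (ξ + η) i 1)‖ ∧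
      1 ≤ ‖crossProduct (fun i => (ξ - η) i 0) (fun i => (ξ - η) i 1)‖ := by
  set u : Fin 3 → ℝ := fun i => ξ i 0
  set v : Fin 3 → ℝ := fun i => ξ i 1
  obtain ⟨m, hm⟩ := exists_norm_le_norm_cross_single v
  set t := 1 + 2 * ‖ξ‖
  -- `|(u ± t eₘ) × v| ≥ t |eₘ × v| - |u × v| ≥ (1 + 2|ξ|) |v| - 2 |u| |v| ≥ |v| ≥ 1`
  have key : ∀ τ : ℝ, |τ| = t →
      1 ≤ ‖crossProduct (fun i => (ξ + Matrix.single m 0 τ : M32) i 0)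
        (fun i => (ξ + Matrix.single m 0 τ : M32) i 1)‖ := by
    intro τ hτ
    have hcol0 : (fun i => (ξ + Matrix.single m 0 τ : M32) i 0) = u + τ • Pi.single m 1 := by
      ext i; simp [u, Matrix.single_apply, Pi.single_apply, eq_comm]
    have hcol1 : (fun i => (ξ + Matrix.single m 0 τ : M32) i 1) = v := by
      ext i; simp [v]
    rw [hcol0, hcol1, map_add, map_smul, LinearMap.add_apply, LinearMap.smul_apply]
    have hsmul := norm_sub_le (crossProduct u v + τ • crossProduct (Pi.single m 1) v)
      (crossProduct u v)
    rw [add_sub_cancel_left, norm_smul, Real.norm_eq_abs, hτ] at hsmul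
    have hu : ‖u‖ * ‖v‖ ≤ ‖ξ‖ * ‖v‖ :=
      mul_le_mul_of_nonneg_right (ξ.norm_col_le 0) (norm_nonneg v)
    nlinarith [norm_cross_le u v, mul_le_mul_of_nonneg_left hm (by positivity : (0 : ℝ) ≤ t)]
  refine ⟨Matrix.single m 0 t, Matrix.rank_single_of_ne_zero _ _ (by positivity), ?_,
    key t (abs_of_pos (by positivity)), ?_⟩
  · refine (Matrix.norm_single_le _ _ _).trans ?_
    rw [abs_of_pos (by positivity)]
    linarith [le_max_left 1 ‖ξ‖, le_max_right 1 ‖ξ‖]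
  · rw [Matrix.sub_single_eq_add_single_neg]
    exact key (-t) (by rw [abs_neg, abs_of_pos (by positivity)])

theorem exists_rankOne_shift_one_le_norm_col (ξ : M32) :
    ∃ η : M32, η.rank = 1 ∧ ‖η‖ ≤ 2 * max 1 ‖ξ‖ ∧
      1 ≤ ‖fun i => (ξ + η) i 1‖ ∧ 1 ≤ ‖fun i => (ξ - η) i 1‖ := by
  set s := 1 + ‖ξ‖
  have key : ∀ τ : ℝ, |τ| = s → 1 ≤ ‖fun i => (ξ + Matrix.single 0 1 τ : M32) i 1‖ := by
    intro τ hτ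
    have hentry : |ξ 0 1 + τ| ≤ ‖fun i => (ξ + Matrix.single 0 1 τ : M32) i 1‖ :=
      (by simp : |ξ 0 1 + τ| = ‖(fun i => (ξ + Matrix.single 0 1 τ : M32) i 1) 0‖).trans_le
        (norm_le_pi_norm (fun i => (ξ + Matrix.single 0 1 τ : M32) i 1) (0 : Fin 3))
    have hξ : |ξ 0 1| ≤ ‖ξ‖ := ξ.norm_entry_le_entrywise_sup_norm
    have := abs_sub_abs_le_abs_sub τ (-ξ 0 1)
    rw [abs_neg, sub_neg_eq_add, add_comm] at this
    linarith
  refine ⟨Matrix.single 0 1 s, Matrix.rank_single_of_ne_zero _ _ (by positivity), ?_,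
    key s (abs_of_pos (by positivity)), ?_⟩
  · refine (Matrix.norm_single_le _ _ _).trans ?_
    rw [abs_of_pos (by positivity)]
    linarith [le_max_left 1 ‖ξ‖, le_max_right 1 ‖ξ‖]
  · rw [Matrix.sub_single_eq_add_single_neg]
    exact key (-s) (by rw [abs_neg, abs_of_pos (by positivity)])

theorem REnv_growth_and_continuous_general
    (p : ℝ) (hp : 1 < p)
    (W : Matrix (Fin 3) (Fin 3) ℝ → ℝ≥0∞)
    (hIcvbis : ∀ δ : ℝ, 0 < δ → ∃ c : ℝ, 0 < c ∧ ∀ ξ : Matrix (Fin 3) (Fin 2) ℝ,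
      δ ≤ ‖crossProduct (fun i => ξ i 0) (fun i => ξ i 1)‖ →
      W0 W ξ ≤ ENNReal.ofReal (c * (1 + ‖ξ‖ ^ p))) :
    (∃ c : ℝ, 0 < c ∧ ∀ ξ : Matrix (Fin 3) (Fin 2) ℝ,
      REnv (W0 W) ξ ≤ ENNReal.ofReal (c * (1 + ‖ξ‖ ^ p))) ∧
    Continuous (REnv (W0 W)) := by
  obtain ⟨c, hc, hW0⟩ := hIcvbis 1 one_pos
  have hR := rankOneConvex_REnv (W0 W)
  have hp0 : 0 ≤ p := by linarith
  have hcol := hR.le_growth_of_shift (T := {ξ | 1 ≤ ‖fun i => ξ i 1‖}) hc.le zero_le_three hp0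
    (fun ζ hζ => (REnv_le _ ζ).trans (hW0 ζ hζ)) exists_rankOne_shift_one_le_norm_cross
  have hgrowth := hR.le_growth_of_shift (T := Set.univ) (by positivity) zero_le_two hp0 hcol
    fun ξ _ => exists_rankOne_shift_one_le_norm_col ξ
  obtain ⟨K, hK, hREnv⟩ : ∃ K : ℝ, 0 < K ∧ ∀ ξ : Matrix (Fin 3) (Fin 2) ℝ,
      REnv (W0 W) ξ ≤ ENNReal.ofReal (K * (1 + ‖ξ‖ ^ p)) :=
    ⟨_, by positivity, fun ξ => hgrowth ξ trivial⟩
  refine ⟨⟨K, hK, hREnv⟩, hR.continuous_of_bounded fun R => ⟨(K * (1 + R ^ p)).toNNReal, ?_⟩⟩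
  exact fun ξ hξ => (hREnv ξ).trans (ENNReal.ofReal_le_ofReal (by gcongr))

/-- Lemma 5.2 (Ben Belgacem): if `W₀` satisfies (Icvbis) then the rank one convex envelope
`RW₀` has `p`-polynomial growth and is continuous. -/
theorem REnv_growth_and_continuous
    (p C : ℝ) (hp : 1 < p) (hC : 0 < C)
    (W : Matrix (Fin 3) (Fin 3) ℝ → ℝ≥0∞)
    (hWcont : Continuous W)
    (hWcoer : ∀ F : Matrix (Fin 3) (Fin 3) ℝ, ENNReal.ofReal (C * ‖F‖ ^ p) ≤ W F)
    (hIcvbis : ∀ δ : ℝ, 0 < δ → ∃ c : ℝ, 0 < c ∧ ∀ ξ : Matrix (Fin 3) (Fin 2) ℝ,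
      δ ≤ ‖crossProduct (fun i => ξ i 0) (fun i => ξ i 1)‖ →
      W0 W ξ ≤ ENNReal.ofReal (c * (1 + ‖ξ‖ ^ p))) :
    (∃ c : ℝ, 0 < c ∧ ∀ ξ : Matrix (Fin 3) (Fin 2) ℝ,
      REnv (W0 W) ξ ≤ ENNReal.ofReal (c * (1 + ‖ξ‖ ^ p))) ∧
    Continuous (REnv (W0 W)) :=
  REnv_growth_and_continuous_general p hp W hIcvbis

end
end
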